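/- arXiv:2308.15215 — 12 statements merged into one kernel-verified Lean document; each statement's English description precedes it below -/
import Mathlib

section
/- For all positive natural numbers M and k there exists a constant C = C(M, k) such that the following holds: for every group G generated by at most k elements and every subgroup H of G with [G : H] ≤ M, there exists a characteristic subgroup H'' of G with H'' ≤ H and [G : H''] ≤ C. -/
/-- **Proposition (pass to subgroup, part 2).**
For all positive naturals `M`, `k` there is `C = C(M, k)` such that:
for every group `G` generated by at most `k` elements and every subgroup `H` of `G`
with `[G : H] ≤ M`, there is a characteristic subgroup `H'' ≤ H` of `G` with
`[G : H''] ≤ C`. -/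
theorem pass_to_subgroup_characteristic (M k : ℕ) (hM : 0 < M) (hk : 0 < k) :
    ∃ C : ℕ, ∀ (G : Type) [Group G] (S : Finset G), S.card ≤ k →
      Subgroup.closure (S : Set G) = ⊤ →
      ∀ H : Subgroup G, H.index ≠ 0 → H.index ≤ M →
        ∃ H'' : Subgroup G, H''.Characteristic ∧ H'' ≤ H ∧ H''.index ≠ 0 ∧
          H''.index ≤ C := by
  classical
  refine ⟨(M.factorial) ^ ((M.factorial) ^ k), ?_⟩
  intro G _ S hScard hSgen H hHne hHM
  set F := Equiv.Perm (Fin M) with hF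
  -- the type of homomorphisms to F is finite
  have hinj : Function.Injective (fun (φ : G →* F) => (fun s : S => φ s)) := by
    intro φ ψ h
    refine MonoidHom.eq_of_eqOn_dense hSgen ?_
    intro x hx
    exact congrFun h ⟨x, hx⟩
  have hfin : Finite (G →* F) := Finite.of_injective _ hinj
  set H'' : Subgroup G := ⨅ φ : G →* F, φ.ker with hH''
  refine ⟨H'', ?_, ?_, ?_, ?_⟩
  · -- characteristic
    rw [Subgroup.characteristic_iff_comap_eq]
    intro σ
    have key : ∀ τ : G ≃* G, H''.comap τ.toMonoidHom ≤ H'' := by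
      intro τ
      rw [hH'', Subgroup.comap_iInf]
      refine le_iInf fun φ => ?_
      refine iInf_le_of_le (φ.comp τ.symm.toMonoidHom) ?_
      rw [MonoidHom.comap_ker]
      intro x hx
      simpa using hx
    refine le_antisymm (key σ) ?_
    have h2 := key σ.symm
    calc H'' = (H''.comap σ.symm.toMonoidHom).comap σ.toMonoidHom := by
            rw [Subgroup.comap_comap]
            ext x
            simp [Subgroup.mem_comap]
      _ ≤ H''.comap σ.toMonoidHom := Subgroup.comap_mono h2
  · -- H'' ≤ H
    have hfinQ : Finite (G ⧸ H) :=
      Nat.finite_of_card_ne_zero (by simpa [Subgroup.index] using hHne)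
    have : Fintype (G ⧸ H) := Fintype.ofFinite _
    have hcard : Fintype.card (G ⧸ H) ≤ Fintype.card (Fin M) := by
      rw [Fintype.card_fin, ← Nat.card_eq_fintype_card]
      exact hHM
    obtain ⟨e⟩ := Function.Embedding.nonempty_of_card_le hcard
    set φ₀ : G →* F :=
      (Equiv.Perm.viaEmbeddingHom e).comp (MulAction.toPermHom G (G ⧸ H)) with hφ₀
    intro x hx
    rw [hH'', Subgroup.mem_iInf] at hx
    have h1 : φ₀ x = 1 := hx φ₀
    have h2 : MulAction.toPermHom G (G ⧸ H) x = 1 := by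
      apply Equiv.Perm.viaEmbeddingHom_injective e
      simpa [hφ₀] using h1
    have h3 : (x : G) • ((1 : G) : G ⧸ H) = ((1 : G) : G ⧸ H) := by
      have := congrFun (congrArg (fun p => p.toFun) h2) ((1 : G) : G ⧸ H)
      simpa [MulAction.toPermHom] using this
    have h4 : ((x : G) : G ⧸ H) = ((1 : G) : G ⧸ H) := by
      rw [← h3, MulAction.Quotient.smul_mk]
      simp
    have h5 : x⁻¹ * 1 ∈ H := QuotientGroup.eq.mp h4
    simpa using H.inv_mem_iff.mp (by simpa using h5)
  · -- index ≠ 0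
    rw [hH'']
    exact Subgroup.index_iInf_ne_zero fun φ =>
      Subgroup.FiniteIndex.index_ne_zero (H := φ.ker)
  · -- index bound
    set ψ : G →* (∀ _ : G →* F, F) := Pi.monoidHom (fun φ => φ) with hψ
    have hker : ψ.ker = H'' := by
      rw [hH'']
      ext x
      simp [hψ, Subgroup.mem_iInf, MonoidHom.mem_ker, Pi.monoidHom, funext_iff]
    have hcardF : Nat.card F = M.factorial := by
      simp [hF, Nat.card_eq_fintype_card, Fintype.card_perm]
    have hcardHom : Nat.card (G →* F) ≤ M.factorial ^ k := by
      calc Nat.card (G →* F) ≤ Nat.card (S → F) :=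
            Nat.card_le_card_of_injective _ hinj
        _ = Nat.card F ^ Nat.card S := Nat.card_fun
        _ ≤ M.factorial ^ k := by
            rw [hcardF]
            apply Nat.pow_le_pow_right (Nat.one_le_iff_ne_zero.mpr M.factorial_ne_zero)
            simpa [Nat.card_eq_fintype_card] using hScard
    calc H''.index = Nat.card ψ.range := by rw [← hker, Subgroup.index_ker]
      _ ≤ Nat.card (∀ _ : G →* F, F) :=
          Nat.card_le_card_of_injective _ Subtype.val_injective
      _ = Nat.card F ^ Nat.card (G →* F) := Nat.card_fun
      _ ≤ M.factorial ^ (M.factorial ^ k) := by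
          rw [hcardF]
          exact Nat.pow_le_pow_right
            (Nat.one_le_iff_ne_zero.mpr M.factorial_ne_zero) hcardHom
end

section
/- Let A be an abelian group generated by at most m elements and let φ : G → A be a surjective group homomorphism with finite kernel. Then G contains a subgroup H of finite index such that H is commutative (all elements of H commute with each other) and H is generated by at most m elements. -/
/-- If `x*y = y*x*c`, `c` commutes with `x`, and `c^k = 1`, then `x^k` commutes with `y`. -/
private lemma pow_comm_aux {G : Type*} [Group G] {x y c : G} (k : ℕ)
    (h : x * y = y * x * c) (hcx : Commute c x) (hck : c ^ k = 1) :
    x ^ k * y = y * x ^ k := by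
  have key : ∀ j : ℕ, x ^ j * y = y * x ^ j * c ^ j := by
    intro j
    induction j with
    | zero => simp
    | succ j ih =>
      calc x ^ (j + 1) * y = x * (x ^ j * y) := by rw [pow_succ']; group
        _ = x * (y * x ^ j * c ^ j) := by rw [ih]
        _ = (x * y) * (x ^ j * c ^ j) := by group
        _ = (y * x * c) * (x ^ j * c ^ j) := by rw [h]
        _ = y * x * (c * x ^ j) * c ^ j := by group
        _ = y * x * (x ^ j * c) * c ^ j := by rw [(hcx.pow_right j).eq]
        _ = y * x ^ (j + 1) * c ^ (j + 1) := by rw [pow_succ', pow_succ]; group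
  rw [key k, hck, mul_one]

/-- **Proposition (finite extension of abelian).**
Let `A` be an abelian group generated by at most `m` elements and let `φ : G → A`
be a surjective group homomorphism with finite kernel.  Then `G` contains a finite
index subgroup `H` which is commutative and generated by at most `m` elements. -/
theorem finite_extension_abelian (G A : Type*) [Group G] [CommGroup A] (m : ℕ)
    (SA : Finset A) (hSAcard : SA.card ≤ m)
    (hSAgen : Subgroup.closure (SA : Set A) = ⊤)
    (φ : G →* A) (hsurj : Function.Surjective φ)
    (hker : (φ.ker : Set G).Finite) :
    ∃ H : Subgroup G, H.index ≠ 0 ∧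
      (∀ x ∈ H, ∀ y ∈ H, x * y = y * x) ∧
      ∃ S : Finset G, (S : Set G) ⊆ (H : Set G) ∧ S.card ≤ m ∧
        Subgroup.closure (S : Set G) = H := by
  classical
  set K : Subgroup G := φ.ker with hK
  have hKfin : Finite K := hker.to_subtype
  -- the centralizer of the kernel
  set C : Subgroup G := Subgroup.centralizer (K : Set G) with hC
  -- C is normal
  have hCnormal : C.Normal := by
    constructor
    intro c hc g s hs
    have ht : g⁻¹ * s * g ∈ K := by
      have : K.Normal := inferInstance
      simpa using this.conj_mem s hs g⁻¹
    have h1 : (g⁻¹ * s * g) * c = c * (g⁻¹ * s * g) := hc _ ht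
    show s * (g * c * g⁻¹) = (g * c * g⁻¹) * s
    calc s * (g * c * g⁻¹) = g * ((g⁻¹ * s * g) * c) * g⁻¹ := by group
      _ = g * (c * (g⁻¹ * s * g)) * g⁻¹ := by rw [h1]
      _ = (g * c * g⁻¹) * s := by group
  -- C has finite index: kernel of conjugation action on K is contained in C
  have hCfi : C.index ≠ 0 := by
    have hker_le : (MulAut.conjNormal (H := K)).ker ≤ C := by
      intro g hg
      rw [Subgroup.mem_centralizer_iff]
      intro s hs
      have h1 : MulAut.conjNormal g = 1 := hg
      have h2 : (MulAut.conjNormal g ⟨s, hs⟩ : G) = s := by rw [h1]; rfl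
      rw [MulAut.conjNormal_apply] at h2
      calc s * g = g * s * g⁻¹ * g := by rw [h2]
        _ = g * s := by group
    have h1 : (MulAut.conjNormal (H := K)).ker.index ≠ 0 := by
      rw [Subgroup.index_ker]
      have : Finite (MulAut K) :=
        Finite.of_injective MulEquiv.toEquiv MulEquiv.toEquiv_injective
      exact Nat.card_ne_zero.mpr ⟨inferInstance, inferInstance⟩
    intro h0
    exact h1 (Nat.eq_zero_of_zero_dvd (h0 ▸ Subgroup.index_dvd_of_le hker_le))
  haveI : C.FiniteIndex := ⟨hCfi⟩
  set n : ℕ := C.index with hn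
  set k : ℕ := Nat.card K with hk
  have hkpos : k ≠ 0 := Nat.card_ne_zero.mpr ⟨inferInstance, inferInstance⟩
  set e : ℕ := n * k with he
  have hepos : e ≠ 0 := Nat.mul_ne_zero hCfi hkpos
  -- lifts
  set g : A → G := Function.surjInv hsurj with hg
  have hgφ : ∀ a, φ (g a) = a := fun a => Function.surjInv_eq hsurj a
  set S : Finset G := SA.image (fun a => g a ^ e) with hS
  set H : Subgroup G := Subgroup.closure (S : Set G) with hH
  -- elements of S pairwise commute
  have hcomm : ∀ x ∈ (S : Set G), ∀ y ∈ (S : Set G), x * y = y * x := by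
    intro u hu v hv
    simp only [hS, Finset.coe_image, Set.mem_image, Finset.mem_coe] at hu hv
    obtain ⟨a, _, rfl⟩ := hu
    obtain ⟨b, _, rfl⟩ := hv
    set x : G := g a ^ n with hx
    set y : G := g b ^ n with hy
    have hxC : x ∈ C := C.pow_index_mem (g a)
    have hyC : y ∈ C := C.pow_index_mem (g b)
    set c : G := x⁻¹ * y⁻¹ * x * y with hc2
    have hxy : x * y = y * x * c := by rw [hc2]; group
    have hcK : c ∈ K := by
      rw [hK, MonoidHom.mem_ker, hc2]
      simp only [map_mul, map_inv]
      rw [mul_comm (φ x)⁻¹ (φ y)⁻¹]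
      group
    have hcx : Commute c x := (hxC c hcK)
    have hcy : Commute c y := (hyC c hcK)
    have hck : c ^ k = 1 := by
      have : (⟨c, hcK⟩ : K) ^ k = 1 := pow_card_eq_one'
      simpa [← Subtype.coe_inj] using this
    -- x^k commutes with y, hence with y^k
    have h1 : x ^ k * y = y * x ^ k := pow_comm_aux k hxy hcx hck
    have h2 : Commute (x ^ k) (y ^ k) := Commute.pow_right h1 k
    calc g a ^ e * g b ^ e = x ^ k * y ^ k := by rw [hx, hy, ← pow_mul, ← pow_mul, ← he]
      _ = y ^ k * x ^ k := h2.eq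
      _ = g b ^ e * g a ^ e := by rw [hx, hy, ← pow_mul, ← pow_mul, ← he]
  -- image of H in A
  set B : Subgroup A := Subgroup.map φ H with hB
  -- every e-th power lies in B
  have hBpow : ∀ a : A, a ^ e ∈ B := by
    intro a
    have ha : a ∈ Subgroup.closure (SA : Set A) := hSAgen ▸ Subgroup.mem_top a
    induction ha using Subgroup.closure_induction with
    | mem a ha =>
        refine ⟨g a ^ e, ?_, by rw [map_pow, hgφ]⟩
        exact Subgroup.subset_closure (by simp [hS]; exact ⟨a, ha, rfl⟩)
    | one => simpa using B.one_mem
    | mul a b _ _ h1 h2 => rw [mul_pow]; exact B.mul_mem h1 h2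
    | inv a _ h1 => rw [inv_pow]; exact B.inv_mem h1
  -- Aated quotient is finite, so B has finite index
  have hBfi : B.index ≠ 0 := by
    haveI : Group.FG A := by
      rw [Group.fg_iff]
      exact ⟨SA, hSAgen, SA.finite_toSet⟩
    haveI : Group.FG (A ⧸ B) := Group.fg_of_surjective (QuotientGroup.mk'_surjective B)
    have htor : Monoid.IsTorsion (A ⧸ B) := by
      intro q
      obtain ⟨a, rfl⟩ := QuotientGroup.mk'_surjective B q
      refine isOfFinOrder_iff_pow_eq_one.mpr ⟨e, Nat.pos_of_ne_zero hepos, ?_⟩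
      rw [← map_pow, QuotientGroup.mk'_apply, QuotientGroup.eq_one_iff]
      exact hBpow a
    haveI : Finite (A ⧸ B) := CommGroup.finite_of_fg_torsion _ htor
    exact Nat.card_ne_zero.mpr ⟨inferInstance, inferInstance⟩
  -- pull back
  set P : Subgroup G := Subgroup.comap φ B with hP
  have hHP : H ≤ P := Subgroup.le_comap_map φ H
  have hPfi : P.index ≠ 0 := by
    rw [hP, Subgroup.index_comap_of_surjective _ hsurj]; exact hBfi
  -- relindex of H in P is finite: every coset is represented by an element of K
  have hrel : H.relIndex P ≠ 0 := by
    rw [Subgroup.relIndex]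
    have hKP : K ≤ P := by
      intro x hx
      have : φ x = 1 := hx
      simp only [hP, Subgroup.mem_comap, this]
      exact B.one_mem
    have hsurjF : Function.Surjective
        (fun c : K => (QuotientGroup.mk (⟨c, hKP c.2⟩ : P) : P ⧸ H.subgroupOf P)) := by
      intro q
      obtain ⟨⟨p, hp⟩, rfl⟩ := QuotientGroup.mk_surjective q
      have hpB : φ p ∈ B := hp
      obtain ⟨h, hhH, hhp⟩ := hpB
      have hcK : p * h⁻¹ ∈ K := by
        rw [hK, MonoidHom.mem_ker, map_mul, map_inv, hhp, mul_inv_cancel]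
      refine ⟨⟨p * h⁻¹, hcK⟩, ?_⟩
      rw [QuotientGroup.eq]
      simp only [Subgroup.mem_subgroupOf] at *
      simpa using hhH
    haveI : Finite (P ⧸ H.subgroupOf P) := Finite.of_surjective _ hsurjF
    exact Nat.card_ne_zero.mpr ⟨inferInstance, inferInstance⟩
  refine ⟨H, ?_, ?_, S, Subgroup.subset_closure, Finset.card_image_le.trans hSAcard, rfl⟩
  · rw [← Subgroup.relIndex_mul_index hHP]
    exact Nat.mul_ne_zero hrel hPfi
  · intro x hx y hy
    exact Subgroup.closure_induction₂ (p := fun a b _ _ => Commute a b)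
      (fun a b ha hb => hcomm a ha b hb)
      (fun x _ => Commute.one_left x) (fun x _ => Commute.one_right x)
      (fun a b c _ _ _ h1 h2 => h1.mul_left h2)
      (fun a b c _ _ _ h1 h2 => h1.mul_right h2)
      (fun a b _ _ h => h.inv_left) (fun a b _ _ h => h.inv_right) hx hy
end

section
/- Let G be a group, H a normal subgroup of G, and a, b ∈ G with the commutator [a, b] := a·b·a⁻¹·b⁻¹ ∈ H. Let M be a positive natural number and let H₀ be a subgroup of G contained in H such that H₀ has index at most M in H and H₀ is characteristic in H (i.e., invariant under every automorphism of the group H). Then for every natural number C with C ≥ 2M, one has [a^{C!}, b] ∈ H₀. -/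
/-!
With `c n = ⁅a ^ n, b⁆` one has the cocycle identity `c (m + n) = a ^ m c n a⁻ᵐ c m`. Hence, modulo
a normal subgroup `N`, `c (m + n) ≡ c m` iff `c n ∈ N`, and `c d ∈ N` forces `c n ∈ N` for every
multiple `n` of `d`. Being characteristic in the normal subgroup `H`, `H₀` is normal in `G`; by
pigeonhole two of `c 0, …, c M ∈ H` lie in one coset of `H₀`, so `c d ∈ H₀` for some `0 < d ≤ M`,
and `d ∣ C!`.
-/

theorem exists_lt_map_eq_of_card_le {β : Type*} [Finite β] {M : ℕ} (f : ℕ → β)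
    (hM : Nat.card β ≤ M) : ∃ i j, i < j ∧ j ≤ M ∧ f i = f j := by
  by_contra! h
  have hinj : Function.Injective fun i : Fin (M + 1) => f i := by
    intro i j hij
    rcases lt_trichotomy i j with hlt | rfl | hgt
    · exact absurd hij (h i j hlt (by omega))
    · rfl
    · exact absurd hij.symm (h j i hgt (by omega))
  simpa using (Nat.card_le_card_of_injective _ hinj).trans hM

open scoped commutatorElement

namespace Subgroup

variable {G : Type*} [Group G]

theorem normal_of_characteristic_subgroupOf {H K : Subgroup G} (hH : H.Normal) (hKH : K ≤ H)
    (hK : (K.subgroupOf H).Characteristic) : K.Normal := by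
  simpa [subgroupOf_map_subtype, inf_of_le_left hKH] using
    ConjAct.normal_of_characteristic_of_normal (K := K.subgroupOf H)

theorem commutatorElement_pow_add (a b : G) (m n : ℕ) :
    ⁅a ^ (m + n), b⁆ = a ^ m * ⁅a ^ n, b⁆ * (a ^ m)⁻¹ * ⁅a ^ m, b⁆ := by
  simp only [commutatorElement_def, pow_add]
  group

variable {N : Subgroup G} {a b : G}

theorem Normal.commutatorElement_pow_add_mul_inv_mem_iff (hN : N.Normal) (m n : ℕ) :
    ⁅a ^ (m + n), b⁆ * ⁅a ^ m, b⁆⁻¹ ∈ N ↔ ⁅a ^ n, b⁆ ∈ N := by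
  rw [commutatorElement_pow_add, mul_inv_cancel_right]
  exact ⟨fun h => by simpa [mul_assoc] using hN.conj_mem' _ h (a ^ m),
    fun h => hN.conj_mem _ h (a ^ m)⟩

theorem Normal.commutatorElement_pow_mem_of_dvd (hN : N.Normal) {d n : ℕ} (hd : ⁅a ^ d, b⁆ ∈ N)
    (hdn : d ∣ n) : ⁅a ^ n, b⁆ ∈ N := by
  obtain ⟨k, rfl⟩ := hdn
  induction k with
  | zero => simp
  | succ k ih =>
    have hstep := (hN.commutatorElement_pow_add_mul_inv_mem_iff (d * k) d).mpr hd
    simpa only [mul_add, mul_one, inv_mul_cancel_right] using N.mul_mem hstep ih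

theorem Normal.commutatorElement_pow_mem (hN : N.Normal) (hab : ⁅a, b⁆ ∈ N) (n : ℕ) :
    ⁅a ^ n, b⁆ ∈ N :=
  hN.commutatorElement_pow_mem_of_dvd (d := 1) (by rwa [pow_one]) (one_dvd n)

theorem Normal.exists_commutatorElement_pow_mem {H : Subgroup G} (hH : H.Normal)
    (hab : ⁅a, b⁆ ∈ H) (hN : N.Normal) (hfin : N.relIndex H ≠ 0) :
    ∃ n, 0 < n ∧ n ≤ N.relIndex H ∧ ⁅a ^ n, b⁆ ∈ N := by
  have : (N.subgroupOf H).FiniteIndex := ⟨hfin⟩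
  obtain ⟨i, j, hij, hjle, heq⟩ := exists_lt_map_eq_of_card_le (M := N.relIndex H)
    (fun n => ((⟨⁅a ^ n, b⁆, hH.commutatorElement_pow_mem hab n⟩ : H) : H ⧸ N.subgroupOf H))
    le_rfl
  refine ⟨j - i, by omega, by omega, ?_⟩
  rw [QuotientGroup.eq, mem_subgroupOf] at heq
  rw [← hN.commutatorElement_pow_add_mul_inv_mem_iff i, Nat.add_sub_cancel' hij.le]
  exact hN.mem_comm_iff.mp heq

end Subgroup

theorem powers_prop_general (G : Type*) [Group G] (H H₀ : Subgroup G) (hN : H.Normal)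
    (a b : G) (hab : a * b * a⁻¹ * b⁻¹ ∈ H)
    (M : ℕ) (hle : H₀ ≤ H)
    (hidxfin : H₀.relIndex H ≠ 0) (hidx : H₀.relIndex H ≤ M)
    (hchar : (H₀.subgroupOf H).Characteristic) :
    ∀ C : ℕ, 2 * M ≤ C →
      a ^ (Nat.factorial C) * b * (a ^ (Nat.factorial C))⁻¹ * b⁻¹ ∈ H₀ := by
  intro C hC
  have hH₀ : H₀.Normal := Subgroup.normal_of_characteristic_subgroupOf hN hle hchar
  obtain ⟨n, hn, hnM, hnH₀⟩ := hN.exists_commutatorElement_pow_mem hab hH₀ hidxfin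
  exact hH₀.commutatorElement_pow_mem_of_dvd hnH₀ (Nat.dvd_factorial hn (by omega))

/-- **Proposition (powers).**
Let `G` be a group, `H ⊴ G`, `a b ∈ G` with `[a, b] = a b a⁻¹ b⁻¹ ∈ H`, `M` a
positive natural, and `H₀ ≤ H` a subgroup which is characteristic in `H` and has
index at most `M` in `H`.  Then for every `C ≥ 2M` one has `[a^{C!}, b] ∈ H₀`. -/
theorem powers_prop (G : Type*) [Group G] (H H₀ : Subgroup G) (hN : H.Normal)
    (a b : G) (hab : a * b * a⁻¹ * b⁻¹ ∈ H)
    (M : ℕ) (hM : 0 < M) (hle : H₀ ≤ H)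
    (hidxfin : H₀.relIndex H ≠ 0) (hidx : H₀.relIndex H ≤ M)
    (hchar : (H₀.subgroupOf H).Characteristic) :
    ∀ C : ℕ, 2 * M ≤ C →
      a ^ (Nat.factorial C) * b * (a ^ (Nat.factorial C))⁻¹ * b⁻¹ ∈ H₀ :=
  powers_prop_general G H H₀ hN a b hab M hle hidxfin hidx hchar
end

section
/- Let Γ be a group, G a characteristic subgroup of Γ admitting a nilpotent basis β = (γ₁, …, γ_n), g ∈ Γ, φ an automorphism of Γ, and C an even positive natural number with [Γ : G] ≤ C/2. Let g_* denote the inner automorphism y ↦ g·y·g⁻¹ of Γ. Then φ^{C!} respects β if and only if (φ ∘ g_*)^{C!} respects β. -/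
/-- A list `(γ₁, …, γ_n)` of elements of `Γ` is a *nilpotent basis* of the
subgroup `G` if it generates `G` and `[γᵢ, γⱼ] ∈ ⟨γ₁, …, γ_{i-1}⟩` for all
`1 ≤ i, j ≤ n`. -/
def IsNilpotentBasis {Γ : Type*} [Group Γ] (G : Subgroup Γ) (l : List Γ) : Prop :=
  Subgroup.closure {x | x ∈ l} = G ∧
    ∀ i j : Fin l.length,
      l.get i * l.get j * (l.get i)⁻¹ * (l.get j)⁻¹ ∈
        Subgroup.closure {x | x ∈ l.take (i : ℕ)}

/-- An automorphism `ψ` of `Γ` *respects* a nilpotent basis `(γ₁, …, γ_n)` of a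
subgroup of `Γ` if, with `G_m := ⟨γ₁, …, γ_m⟩` (and `G_0` trivial),
`ψ(G_m) = G_m` and `ψ(x)·x⁻¹ ∈ G_{m-1}` for all `x ∈ G_m`, for every `1 ≤ m ≤ n`. -/
def RespectsBasis {Γ : Type*} [Group Γ] (ψ : MulAut Γ) (l : List Γ) : Prop :=
  ∀ m : ℕ, 1 ≤ m → m ≤ l.length →
    (Subgroup.closure {x | x ∈ l.take m}).map ψ.toMonoidHom =
        Subgroup.closure {x | x ∈ l.take m} ∧
      ∀ x ∈ Subgroup.closure {x | x ∈ l.take m},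
        ψ x * x⁻¹ ∈ Subgroup.closure {x | x ∈ l.take (m - 1)}

/-!
Write `ψ = φ ∘ g_*` and `N = C!`. Since `φ ∘ g_* = (φ g)_* ∘ φ`, one gets `ψ^N = k_* ∘ φ^N`, where
`k` is the `N`-th iterate of `1` under the affine map `x ↦ φ(g) · φ(x)`. This map descends to a
permutation of the finite set `Γ ⧸ G`, which has at most `C` elements, so its `N`-th power is the
identity and `k ∈ G`. Finally, inner automorphisms by elements of `G` respect `β`: the basis
condition makes `[G, G_m] ≤ G_{m-1}`, and the automorphisms respecting `β` form a subgroup.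
-/

open scoped commutatorElement

section

variable {Γ : Type*} [Group Γ]

namespace MulAut

def stabilizerMod (K L : Subgroup Γ) : Subgroup (MulAut Γ) where
  carrier := {ψ | K.map ψ.toMonoidHom = K ∧ ∀ x ∈ K, ψ x * x⁻¹ ∈ L}
  one_mem' := ⟨Subgroup.map_id K, fun x _ ↦ by simp⟩
  mul_mem' := by
    rintro ψ c ⟨hψK, hψL⟩ ⟨hcK, hcL⟩
    have hcx : ∀ x ∈ K, c x ∈ K := fun x hx ↦ hcK ▸ Subgroup.mem_map_of_mem _ hx
    refine ⟨?_, fun x hx ↦ ?_⟩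
    · change K.map (ψ.toMonoidHom.comp c.toMonoidHom) = K
      rw [← Subgroup.map_map, hcK, hψK]
    have split : ψ (c x) * x⁻¹ = (ψ (c x) * (c x)⁻¹) * (c x * x⁻¹) := by group
    exact split ▸ L.mul_mem (hψL _ (hcx x hx)) (hcL x hx)
  inv_mem' := by
    rintro ψ ⟨hK, hL⟩
    have hmap : K.map ψ⁻¹.toMonoidHom = K := (K.map_symm_eq_iff_map_eq).mpr hK
    refine ⟨hmap, fun x hx ↦ ?_⟩
    have hy : ψ⁻¹ x ∈ K := hmap ▸ Subgroup.mem_map_of_mem _ hx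
    have flip : ψ⁻¹ x * x⁻¹ = (ψ (ψ⁻¹ x) * (ψ⁻¹ x)⁻¹)⁻¹ := by simp
    exact flip ▸ L.inv_mem (hL _ hy)

theorem conj_mem_stabilizerMod {K L : Subgroup Γ} {h : Γ}
    (hK : h ∈ Subgroup.normalizer (K : Set Γ)) (hL : ∀ x ∈ K, ⁅h, x⁆ ∈ L) :
    conj h ∈ stabilizerMod K L :=
  ⟨Subgroup.mem_normalizer_iff_map_conj_eq.mp hK, hL⟩

theorem mul_conj (φ : MulAut Γ) (g : Γ) : φ * conj g = conj (φ g) * φ := by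
  ext x
  simp

theorem conj_mul_pow (φ : MulAut Γ) (a : Γ) (n : ℕ) :
    (conj a * φ) ^ n = conj ((fun x ↦ a * φ x)^[n] 1) * φ ^ n := by
  induction n with
  | zero => simp
  | succ n ih =>
    rw [pow_succ', ih, Function.iterate_succ_apply', map_mul, pow_succ', mul_assoc, mul_assoc,
      ← mul_assoc φ, mul_conj, mul_assoc]

end MulAut

namespace Subgroup

theorem le_normalizer_of_commutator_mem {H K L : Subgroup Γ} (hLK : L ≤ K)
    (hHK : ∀ h ∈ H, ∀ k ∈ K, ⁅h, k⁆ ∈ L) : H ≤ normalizer K :=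
  le_normalizer_iff.mpr fun h hh k hk ↦ by
    have e : h * k * h⁻¹ = ⁅h, k⁆ * k := by group
    exact e ▸ K.mul_mem (hLK (hHK h hh k hk)) hk

theorem commutator_closure_le {S T : Set Γ} {N : Subgroup Γ}
    (hS : closure S ≤ normalizer N) (hT : closure T ≤ normalizer N)
    (hST : ∀ s ∈ S, ∀ t ∈ T, ⁅s, t⁆ ∈ N) : ⁅closure S, closure T⁆ ≤ N := by
  have conjS := le_normalizer_iff.mp hS
  have conjT := le_normalizer_iff.mp hT
  rw [commutator_le]
  intro x hx y hy
  induction hx using closure_induction with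
  | mem s hs =>
    induction hy using closure_induction with
    | mem t ht => exact hST s hs t ht
    | one => simp
    | mul y z hy _ py pz =>
      have e : ⁅s, y * z⁆ = ⁅s, y⁆ * (y * ⁅s, z⁆ * y⁻¹) := by group
      exact e ▸ N.mul_mem py (conjT y hy _ pz)
    | inv y hy py =>
      have e : ⁅s, y⁻¹⁆ = y⁻¹ * ⁅s, y⁆⁻¹ * y⁻¹⁻¹ := by group
      exact e ▸ conjT _ (inv_mem hy) _ (N.inv_mem py)
  | one => simp
  | mul x z hx _ px pz =>
    have e : ⁅x * z, y⁆ = x * ⁅z, y⁆ * x⁻¹ * ⁅x, y⁆ := by group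
    exact e ▸ N.mul_mem (conjS x hx _ pz) px
  | inv x hx px =>
    have e : ⁅x⁻¹, y⁆ = x⁻¹ * ⁅x, y⁆⁻¹ * x⁻¹⁻¹ := by group
    exact e ▸ conjS _ (inv_mem hx) _ (N.inv_mem px)

end Subgroup

namespace List

/-- The subgroup `G_m` of a nilpotent basis `l`. -/
def prefixClosure (l : List Γ) (m : ℕ) : Subgroup Γ :=
  Subgroup.closure {x | x ∈ l.take m}

theorem prefixClosure_mono (l : List Γ) : Monotone l.prefixClosure :=
  fun _ _ hab ↦ Subgroup.closure_mono fun _ hx ↦ List.take_subset_take_left l hab hx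

theorem prefixClosure_le_closure (l : List Γ) (m : ℕ) :
    l.prefixClosure m ≤ Subgroup.closure {x | x ∈ l} :=
  Subgroup.closure_mono fun _ hx ↦ List.take_subset m l hx

theorem prefixClosure_zero (l : List Γ) : l.prefixClosure 0 = ⊥ := by
  simp [prefixClosure]

end List

def respectsBasisSubgroup (l : List Γ) : Subgroup (MulAut Γ) :=
  ⨅ (m : ℕ) (_ : 1 ≤ m) (_ : m ≤ l.length),
    MulAut.stabilizerMod (l.prefixClosure m) (l.prefixClosure (m - 1))

theorem mem_respectsBasisSubgroup {l : List Γ} {ψ : MulAut Γ} :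
    ψ ∈ respectsBasisSubgroup l ↔ RespectsBasis ψ l := by
  simp only [respectsBasisSubgroup, Subgroup.mem_iInf]
  rfl

namespace IsNilpotentBasis

variable {G : Subgroup Γ} {l : List Γ}

theorem commutator_mem (hl : IsNilpotentBasis G l) {m : ℕ} {h x : Γ} (hh : h ∈ G)
    (hx : x ∈ l.prefixClosure m) : ⁅h, x⁆ ∈ l.prefixClosure (m - 1) := by
  induction m generalizing h x with
  | zero =>
    rw [l.prefixClosure_zero, Subgroup.mem_bot] at hx
    simp [hx]
  | succ m ih =>
    have hnorm : G ≤ Subgroup.normalizer (l.prefixClosure m : Set Γ) :=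
      Subgroup.le_normalizer_of_commutator_mem (l.prefixClosure_mono (m.sub_le 1))
        fun _ hh _ hk ↦ ih hh hk
    rw [← hl.1] at hnorm hh
    refine Subgroup.commutator_le.mp (Subgroup.commutator_closure_le hnorm
      ((l.prefixClosure_le_closure _).trans hnorm) ?_) h hh x hx
    rintro s hs t ht
    obtain ⟨j, rfl⟩ := List.mem_iff_get.mp hs
    obtain ⟨i, hi, rfl⟩ := List.mem_take_iff_getElem.mp ht
    obtain ⟨him, hil⟩ := lt_min_iff.mp hi
    rw [← commutatorElement_inv]
    exact Subgroup.inv_mem _ (l.prefixClosure_mono (Nat.le_of_lt_succ him) (hl.2 ⟨i, hil⟩ j))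

theorem conj_mem_respectsBasisSubgroup (hl : IsNilpotentBasis G l) {h : Γ} (hh : h ∈ G) :
    MulAut.conj h ∈ respectsBasisSubgroup l := by
  simp only [respectsBasisSubgroup, Subgroup.mem_iInf]
  intro m _ _
  refine MulAut.conj_mem_stabilizerMod ?_ fun x hx ↦ hl.commutator_mem hh hx
  exact Subgroup.le_normalizer_of_commutator_mem (l.prefixClosure_mono (m.sub_le 1))
    (H := G) (fun _ hh _ hk ↦ hl.commutator_mem hh hk) hh

end IsNilpotentBasis

theorem Subgroup.iterate_mul_map_one_mem (G : Subgroup Γ) [G.Normal] [G.FiniteIndex]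
    {φ : MulAut Γ} (hφ : G.map φ.toMonoidHom = G) (a : Γ) {n : ℕ}
    (hn : G.index.factorial ∣ n) : (fun x ↦ a * φ x)^[n] 1 ∈ G := by
  let φbar := QuotientGroup.congr G G φ hφ
  let σ : Equiv.Perm (Γ ⧸ G) := Equiv.mulLeft (a : Γ ⧸ G) * φbar.toEquiv
  have orbit : ∀ k, (σ ^ k) 1 = (((fun x ↦ a * φ x)^[k] 1 : Γ) : Γ ⧸ G) := by
    intro k
    induction k with
    | zero => rfl
    | succ k ih =>
      rw [pow_succ', Equiv.Perm.mul_apply, ih, Function.iterate_succ_apply']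
      rfl
  have hσ : σ ^ n = 1 := by
    refine orderOf_dvd_iff_pow_eq_one.mp ((_root_.orderOf_dvd_natCard σ).trans ?_)
    rwa [Nat.card_perm, ← index_eq_card]
  rw [← QuotientGroup.eq_one_iff, ← orbit, hσ]
  rfl

end

theorem replace_general (Γ : Type*) [Group Γ] (G : Subgroup Γ) (hchar : G.Characteristic)
    (l : List Γ) (hl : IsNilpotentBasis G l) (g : Γ) (φ : MulAut Γ)
    (C : ℕ) (hidxfin : G.index ≠ 0) (hidx : G.index ≤ C / 2) :
    RespectsBasis (φ ^ Nat.factorial C) l ↔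
      RespectsBasis ((φ * MulAut.conj g) ^ Nat.factorial C) l := by
  have : G.FiniteIndex := ⟨hidxfin⟩
  have hk : (fun x ↦ φ g * φ x)^[C.factorial] 1 ∈ G :=
    G.iterate_mul_map_one_mem (Subgroup.characteristic_iff_map_eq.mp hchar φ) (φ g)
      (Nat.factorial_dvd_factorial (hidx.trans (Nat.div_le_self C 2)))
  have hconj := hl.conj_mem_respectsBasisSubgroup hk
  rw [MulAut.mul_conj, MulAut.conj_mul_pow, ← mem_respectsBasisSubgroup,
    ← mem_respectsBasisSubgroup, Subgroup.mul_mem_cancel_left _ hconj]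

/-- **Proposition (replace).**
Let `Γ` be a group, `G` a characteristic subgroup of `Γ` admitting a nilpotent
basis `β`, `g ∈ Γ`, `φ` an automorphism of `Γ`, and `C` an even positive natural
with `[Γ : G] ≤ C/2`.  Then `φ^{C!}` respects `β` iff `(φ ∘ g_*)^{C!}` respects
`β`. -/
theorem replace (Γ : Type*) [Group Γ] (G : Subgroup Γ) (hchar : G.Characteristic)
    (l : List Γ) (hl : IsNilpotentBasis G l) (g : Γ) (φ : MulAut Γ)
    (C : ℕ) (hC : 0 < C) (heven : Even C)
    (hidxfin : G.index ≠ 0) (hidx : G.index ≤ C / 2) :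
    RespectsBasis (φ ^ Nat.factorial C) l ↔
      RespectsBasis ((φ * MulAut.conj g) ^ Nat.factorial C) l :=
  replace_general Γ G hchar l hl g φ C hidxfin hidx
end

section
/- Let X be a metric space, p ∈ X, and g an isometric equivalence of X. Then dist(g(p), p) ≤ d₀^p(g, id_X) ≤ dist(g(p), p) + 2√2. -/
/- Both bounds come from comparing `h₁ x` with `h₂ x` through `h₁ p` and `h₂ p`: on `B_r(p)` the
displacement differs from the one at `p` by at most `2r`. The centre gives the lower bound for every
`r`, and the choice `r = 1/√2` minimises `1/r + 2r = 2√2`. -/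

/-- The distance `d₀^p(h₁, h₂) = inf_{r>0} (1/r + sup_{x ∈ B_r(p)} dist (h₁ x) (h₂ x))`
on the group of isometric equivalences of a metric space `X`. -/
noncomputable def d0 {X : Type*} [MetricSpace X] (p : X) (h₁ h₂ : X ≃ᵢ X) : ℝ :=
  ⨅ r : Set.Ioi (0 : ℝ),
    (1 / (r : ℝ) + ⨆ x : Metric.ball p (r : ℝ), dist (h₁ x.1) (h₂ x.1))

section

variable {X : Type*} [MetricSpace X]

theorem Isometry.dist_apply_le {f g : X → X} (hf : Isometry f) (hg : Isometry g) (p x : X) :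
    dist (f x) (g x) ≤ dist (f p) (g p) + 2 * dist x p := by
  calc dist (f x) (g x) ≤ dist (f x) (f p) + dist (f p) (g p) + dist (g p) (g x) :=
        dist_triangle4 _ _ _ _
    _ = dist (f p) (g p) + 2 * dist x p := by
        rw [hf.dist_eq, hg.dist_eq, dist_comm p x]; ring

variable (p : X) (h₁ h₂ : X ≃ᵢ X) {r : ℝ}

theorem IsometryEquiv.dist_apply_le_of_mem_ball {x : X} (hx : x ∈ Metric.ball p r) :
    dist (h₁ x) (h₂ x) ≤ dist (h₁ p) (h₂ p) + 2 * r := by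
  have := h₁.isometry.dist_apply_le h₂.isometry p x
  linarith [Metric.mem_ball.mp hx]

theorem IsometryEquiv.bddAbove_range_dist_ball :
    BddAbove (Set.range fun x : Metric.ball p r => dist (h₁ x.1) (h₂ x.1)) := by
  refine ⟨dist (h₁ p) (h₂ p) + 2 * r, ?_⟩
  rintro _ ⟨⟨x, hx⟩, rfl⟩
  exact h₁.dist_apply_le_of_mem_ball p h₂ hx

theorem IsometryEquiv.dist_le_iSup_ball (hr : 0 < r) :
    dist (h₁ p) (h₂ p) ≤ ⨆ x : Metric.ball p r, dist (h₁ x.1) (h₂ x.1) :=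
  le_ciSup (f := fun x : Metric.ball p r => dist (h₁ x.1) (h₂ x.1))
    (h₁.bddAbove_range_dist_ball p h₂) ⟨p, Metric.mem_ball_self hr⟩

theorem IsometryEquiv.iSup_ball_le (hr : 0 < r) :
    ⨆ x : Metric.ball p r, dist (h₁ x.1) (h₂ x.1) ≤ dist (h₁ p) (h₂ p) + 2 * r :=
  haveI : Nonempty (Metric.ball p r) := ⟨⟨p, Metric.mem_ball_self hr⟩⟩
  ciSup_le fun x => h₁.dist_apply_le_of_mem_ball p h₂ x.2

theorem dist_le_d0 : dist (h₁ p) (h₂ p) ≤ d0 p h₁ h₂ :=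
  le_ciInf fun r => by
    have := h₁.dist_le_iSup_ball p h₂ r.2
    have : (0 : ℝ) ≤ 1 / (r : ℝ) := one_div_nonneg.mpr (le_of_lt r.2)
    linarith

theorem d0_le_of_pos (hr : 0 < r) : d0 p h₁ h₂ ≤ dist (h₁ p) (h₂ p) + (1 / r + 2 * r) := by
  have hbdd : BddBelow (Set.range fun r : Set.Ioi (0 : ℝ) =>
      1 / (r : ℝ) + ⨆ x : Metric.ball p (r : ℝ), dist (h₁ x.1) (h₂ x.1)) :=
    ⟨0, by
      rintro _ ⟨r, rfl⟩
      exact add_nonneg (one_div_nonneg.mpr (le_of_lt r.2)) (Real.iSup_nonneg fun _ => dist_nonneg)⟩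
  calc d0 p h₁ h₂ ≤ 1 / r + ⨆ x : Metric.ball p r, dist (h₁ x.1) (h₂ x.1) :=
        ciInf_le hbdd (⟨r, hr⟩ : Set.Ioi (0 : ℝ))
    _ ≤ 1 / r + (dist (h₁ p) (h₂ p) + 2 * r) := by gcongr; exact h₁.iSup_ball_le p h₂ hr
    _ = dist (h₁ p) (h₂ p) + (1 / r + 2 * r) := by ring

end

theorem one_div_add_two_mul_inv_sqrt_two : 1 / (√2)⁻¹ + 2 * (√2)⁻¹ = 2 * √2 := by
  have h : √2 * √2 = 2 := Real.mul_self_sqrt zero_le_two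
  field_simp
  linarith

/-- **Inequality (norm-dist).**
For an isometric equivalence `g` of a metric space `X` and `p ∈ X`,
`dist (g p) p ≤ d₀^p(g, id) ≤ dist (g p) p + 2√2`. -/
theorem norm_dist (X : Type*) [MetricSpace X] (p : X) (g : X ≃ᵢ X) :
    dist (g p) p ≤ d0 p g (IsometryEquiv.refl X) ∧
      d0 p g (IsometryEquiv.refl X) ≤ dist (g p) p + 2 * Real.sqrt 2 := by
  refine ⟨dist_le_d0 p g (IsometryEquiv.refl X), ?_⟩
  have := d0_le_of_pos p g (IsometryEquiv.refl X) (inv_pos.mpr (Real.sqrt_pos.mpr zero_lt_two))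
  rwa [one_div_add_two_mul_inv_sqrt_two] at this
end

section
/- Let X be a metric space and p ∈ X. Then d₀^p is a left-invariant metric on the group of isometric equivalences of X: for all isometric equivalences g, h₁, h₂, h₃ of X, the value d₀^p(h₁, h₂) is a finite nonnegative real number, d₀^p(h₁, h₂) = 0 if and only if h₁ = h₂, d₀^p(h₁, h₂) = d₀^p(h₂, h₁), d₀^p(h₁, h₃) ≤ d₀^p(h₁, h₂) + d₀^p(h₂, h₃), and d₀^p(g ∘ h₁, g ∘ h₂) = d₀^p(h₁, h₂). -/
section aux

variable {X : Type*} [MetricSpace X] (p : X)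

lemma d0_bdd (h₁ h₂ : X ≃ᵢ X) (r : ℝ) :
    BddAbove (Set.range fun x : Metric.ball p r => dist (h₁ x.1) (h₂ x.1)) := by
  refine ⟨2 * r + dist (h₁ p) (h₂ p), ?_⟩
  rintro _ ⟨⟨x, hx⟩, rfl⟩
  have hx' : dist x p < r := Metric.mem_ball.1 hx
  have t1 : dist (h₁ x) (h₂ x) ≤ dist (h₁ x) (h₁ p) + dist (h₁ p) (h₂ p) + dist (h₂ p) (h₂ x) :=
    dist_triangle4 _ _ _ _
  have e1 : dist (h₁ x) (h₁ p) = dist x p := h₁.isometry.dist_eq x p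
  have e2 : dist (h₂ p) (h₂ x) = dist p x := h₂.isometry.dist_eq p x
  have : dist p x = dist x p := dist_comm p x
  simp only [e1, e2] at t1
  linarith

lemma d0_S_nonneg (h₁ h₂ : X ≃ᵢ X) {r : ℝ} (hr : 0 < r) :
    0 ≤ ⨆ x : Metric.ball p r, dist (h₁ x.1) (h₂ x.1) :=
  le_trans dist_nonneg (le_ciSup (d0_bdd p h₁ h₂ r) ⟨p, Metric.mem_ball_self hr⟩)

lemma d0_term_nonneg (h₁ h₂ : X ≃ᵢ X) (r : Set.Ioi (0 : ℝ)) :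
    (0 : ℝ) ≤ 1 / (r : ℝ) + ⨆ x : Metric.ball p (r : ℝ), dist (h₁ x.1) (h₂ x.1) :=
  add_nonneg (le_of_lt (one_div_pos.2 r.2)) (d0_S_nonneg p h₁ h₂ r.2)

lemma d0_bddBelow (h₁ h₂ : X ≃ᵢ X) :
    BddBelow (Set.range fun r : Set.Ioi (0 : ℝ) =>
      1 / (r : ℝ) + ⨆ x : Metric.ball p (r : ℝ), dist (h₁ x.1) (h₂ x.1)) := by
  refine ⟨0, ?_⟩
  rintro _ ⟨r, rfl⟩
  exact d0_term_nonneg p h₁ h₂ r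

end aux

/-- `d₀^p` is a left invariant metric on the group of isometric equivalences of
`X`: it is nonnegative (and real-valued, hence finite), vanishes exactly on the
diagonal, is symmetric, satisfies the triangle inequality, and is invariant
under left composition with an isometric equivalence. -/
theorem d0_is_left_invariant_metric (X : Type*) [MetricSpace X] (p : X)
    (g h₁ h₂ h₃ : X ≃ᵢ X) :
    0 ≤ d0 p h₁ h₂ ∧
      (d0 p h₁ h₂ = 0 ↔ h₁ = h₂) ∧
      d0 p h₁ h₂ = d0 p h₂ h₁ ∧
      d0 p h₁ h₃ ≤ d0 p h₁ h₂ + d0 p h₂ h₃ ∧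
      d0 p (h₁.trans g) (h₂.trans g) = d0 p h₁ h₂ := by
  have nonneg : ∀ a b : X ≃ᵢ X, 0 ≤ d0 p a b := fun a b =>
    Real.iInf_nonneg (d0_term_nonneg p a b)
  refine ⟨nonneg h₁ h₂, ?_, ?_, ?_, ?_⟩
  · constructor
    · -- d0 = 0 → h₁ = h₂
      intro h0
      refine IsometryEquiv.ext fun x => ?_
      have key : ∀ ε > (0 : ℝ), dist (h₁ x) (h₂ x) ≤ ε := by
        intro ε hε
        set ε' := min ε (1 / (dist p x + 1)) with hε'
        have hd1 : (0 : ℝ) < dist p x + 1 := by positivity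
        have hε'pos : 0 < ε' := lt_min hε (by positivity)
        have hlt : d0 p h₁ h₂ < ε' := by rw [h0]; exact hε'pos
        obtain ⟨⟨r, hr⟩, hterm⟩ := exists_lt_of_ciInf_lt hlt
        have hr : (0 : ℝ) < r := hr
        have hSnn := d0_S_nonneg p h₁ h₂ hr
        have h1r : 1 / r < ε' := by
          have := d0_S_nonneg p h₁ h₂ hr
          simp only at hterm
          linarith
        have h1r' : 1 / r < 1 / (dist p x + 1) := lt_of_lt_of_le h1r (min_le_right _ _)
        have hrd : dist p x + 1 < r := by
          rwa [div_lt_div_iff₀ hr hd1, one_mul, one_mul] at h1r'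
        have hmem : x ∈ Metric.ball p r := by
          rw [Metric.mem_ball, dist_comm]; linarith
        have h1 : dist (h₁ x) (h₂ x) ≤ ⨆ y : Metric.ball p r, dist (h₁ y.1) (h₂ y.1) :=
          le_ciSup (d0_bdd p h₁ h₂ r) ⟨x, hmem⟩
        have h1rpos : 0 < 1 / r := by positivity
        have : dist (h₁ x) (h₂ x) < ε' := by
          simp only at hterm; linarith
        exact le_trans this.le (min_le_left _ _)
      exact eq_of_dist_eq_zero (le_antisymm (le_of_forall_pos_le_add
        (fun ε hε => by simpa using key ε hε)) dist_nonneg)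
    · -- h₁ = h₂ → d0 = 0
      rintro rfl
      refine le_antisymm ?_ (nonneg h₁ h₁)
      refine le_of_forall_pos_le_add fun ε hε => ?_
      have : d0 p h₁ h₁ ≤ 1 / (1 / ε) +
          ⨆ x : Metric.ball p (1 / ε : ℝ), dist (h₁ x.1) (h₁ x.1) :=
        ciInf_le (d0_bddBelow p h₁ h₁) ⟨1 / ε, by simp [hε]⟩
      have hsup : (⨆ x : Metric.ball p (1 / ε : ℝ), dist (h₁ x.1) (h₁ x.1)) = 0 := by
        have : Nonempty (Metric.ball p (1 / ε : ℝ)) :=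
          ⟨⟨p, Metric.mem_ball_self (by positivity)⟩⟩
        simp [ciSup_const]
      rw [hsup, one_div_one_div] at this
      linarith
  · -- symmetry
    unfold d0
    congr 1; funext r; congr 1; exact iSup_congr fun x => dist_comm _ _
  · -- triangle
    refine le_ciInf_add_ciInf fun r s => ?_
    obtain ⟨r, hr⟩ := r; obtain ⟨s, hs⟩ := s
    have hr : (0 : ℝ) < r := hr
    have hs : (0 : ℝ) < s := hs
    set t := min r s with ht
    have htpos : 0 < t := lt_min hr hs
    have step1 : d0 p h₁ h₃ ≤ 1 / t + ⨆ x : Metric.ball p t, dist (h₁ x.1) (h₃ x.1) :=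
      ciInf_le (d0_bddBelow p h₁ h₃) ⟨t, htpos⟩
    have htri : (⨆ x : Metric.ball p t, dist (h₁ x.1) (h₃ x.1)) ≤
        (⨆ x : Metric.ball p t, dist (h₁ x.1) (h₂ x.1)) +
        (⨆ x : Metric.ball p t, dist (h₂ x.1) (h₃ x.1)) := by
      have : Nonempty (Metric.ball p t) := ⟨⟨p, Metric.mem_ball_self htpos⟩⟩
      refine ciSup_le fun x => le_trans (dist_triangle _ (h₂ x.1) _) ?_
      exact add_le_add (le_ciSup (d0_bdd p h₁ h₂ t) x) (le_ciSup (d0_bdd p h₂ h₃ t) x)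
    have mono : ∀ (a b : X ≃ᵢ X) (u : ℝ), t ≤ u →
        (⨆ x : Metric.ball p t, dist (a x.1) (b x.1)) ≤
        ⨆ x : Metric.ball p u, dist (a x.1) (b x.1) := by
      intro a b u hu
      have : Nonempty (Metric.ball p t) := ⟨⟨p, Metric.mem_ball_self htpos⟩⟩
      refine ciSup_le fun x => ?_
      exact le_ciSup (d0_bdd p a b u) ⟨x.1, Metric.ball_subset_ball hu x.2⟩
    have hinv : 1 / t ≤ 1 / r + 1 / s := by
      have h1 : 0 < 1 / r := one_div_pos.2 hr
      have h2 : 0 < 1 / s := one_div_pos.2 hs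
      rcases le_total r s with h | h
      · rw [ht, min_eq_left h]; linarith
      · rw [ht, min_eq_right h]; linarith
    calc d0 p h₁ h₃ ≤ 1 / t + ⨆ x : Metric.ball p t, dist (h₁ x.1) (h₃ x.1) := step1
      _ ≤ (1 / r + 1 / s) + ((⨆ x : Metric.ball p t, dist (h₁ x.1) (h₂ x.1)) +
          (⨆ x : Metric.ball p t, dist (h₂ x.1) (h₃ x.1))) := add_le_add hinv htri
      _ ≤ (1 / r + 1 / s) + ((⨆ x : Metric.ball p r, dist (h₁ x.1) (h₂ x.1)) +
          (⨆ x : Metric.ball p s, dist (h₂ x.1) (h₃ x.1))) := by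
            refine add_le_add le_rfl (add_le_add (mono h₁ h₂ r (min_le_left _ _))
              (mono h₂ h₃ s (min_le_right _ _)))
      _ = (1 / r + ⨆ x : Metric.ball p r, dist (h₁ x.1) (h₂ x.1)) +
          (1 / s + ⨆ x : Metric.ball p s, dist (h₂ x.1) (h₃ x.1)) := by ring
  · -- left invariance
    unfold d0
    congr 1; funext r; congr 1
    exact iSup_congr fun x => g.isometry.dist_eq _ _
end

section
/- Let X be a metric space, p ∈ X, Γ a subgroup of the group of isometric equivalences of X, and D > 0. Suppose Γ = 𝒢(Γ, p, D), i.e., Γ is generated by { g ∈ Γ : dist(g(p), p) ≤ D }. Then for every ε > 0, Γ is generated by { g ∈ Γ : d₀^p(g, id_X) ≤ D + 2√2 + ε }. -/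
/-- `𝒢(Γ, p, r)`: the subgroup generated by the elements of `Γ` moving `p` a
distance at most `r`. -/
def genBelow {X : Type*} [MetricSpace X] (Γ : Subgroup (X ≃ᵢ X)) (p : X) (r : ℝ) :
    Subgroup (X ≃ᵢ X) :=
  Subgroup.closure {g : X ≃ᵢ X | g ∈ Γ ∧ dist (g p) p ≤ r}

lemma d0_le_of_dist_le {X : Type*} [MetricSpace X] (p : X) (g : X ≃ᵢ X) (D : ℝ)
    (hg : dist (g p) p ≤ D) : d0 p g (IsometryEquiv.refl X) ≤ D + 2 * Real.sqrt 2 := by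
  have hs2 : (0:ℝ) < Real.sqrt 2 := Real.sqrt_pos.2 (by norm_num)
  have hr : (0:ℝ) < 1 / Real.sqrt 2 := by positivity
  clear hs2
  have hs2 : (0:ℝ) < Real.sqrt 2 := Real.sqrt_pos.2 (by norm_num)
  have hbdd : BddBelow (Set.range fun r : Set.Ioi (0:ℝ) =>
      (1 / (r : ℝ) + ⨆ x : Metric.ball p (r : ℝ), dist (g x.1) ((IsometryEquiv.refl X) x.1))) := by
    refine ⟨0, ?_⟩
    rintro y ⟨r, rfl⟩
    have h1 : (0:ℝ) ≤ 1 / (r : ℝ) := le_of_lt (by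
      have := r.2
      simp only [Set.mem_Ioi] at this
      positivity)
    have h2 : (0:ℝ) ≤ ⨆ x : Metric.ball p (r : ℝ), dist (g x.1) ((IsometryEquiv.refl X) x.1) :=
      Real.iSup_nonneg fun x => dist_nonneg
    linarith
  have key : d0 p g (IsometryEquiv.refl X) ≤
      1 / (1 / Real.sqrt 2) + ⨆ x : Metric.ball p (1 / Real.sqrt 2),
        dist (g x.1) ((IsometryEquiv.refl X) x.1) :=
    ciInf_le hbdd (⟨1 / Real.sqrt 2, hr⟩ : Set.Ioi (0:ℝ))
  have hsup : (⨆ x : Metric.ball p (1 / Real.sqrt 2),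
      dist (g x.1) ((IsometryEquiv.refl X) x.1)) ≤ Real.sqrt 2 + D := by
    apply Real.iSup_le
    · rintro ⟨x, hx⟩
      simp only [Metric.mem_ball] at hx
      have h1 : dist (g x) (g p) = dist x p := g.isometry.dist_eq x p
      have h2 : dist (g x) x ≤ dist (g x) (g p) + dist (g p) p + dist p x :=
        dist_triangle4 _ _ _ _
      have h3 : dist p x = dist x p := dist_comm p x
      have hs : Real.sqrt 2 * Real.sqrt 2 = 2 :=
        Real.mul_self_sqrt (by norm_num)
      have hdd : 2 * (1 / Real.sqrt 2) = Real.sqrt 2 := by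
        rw [mul_one_div, div_eq_iff (ne_of_gt hs2), hs]
      show dist (g x) x ≤ Real.sqrt 2 + D
      nlinarith
    · have hnn := dist_nonneg (x := g p) (y := p)
      linarith
  have hone : 1 / (1 / Real.sqrt 2) = Real.sqrt 2 := one_div_one_div _
  calc d0 p g (IsometryEquiv.refl X) ≤ _ := key
    _ ≤ Real.sqrt 2 + (Real.sqrt 2 + D) := by rw [hone]; linarith
    _ = D + 2 * Real.sqrt 2 := by ring

/-- **Proposition (bounded generation).**
If `Γ = 𝒢(Γ, p, D)` for some `D > 0`, then for every `ε > 0` the group `Γ` is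
generated by its elements at `d₀^p`-distance at most `D + 2√2 + ε` from the
identity. -/
theorem bounded_generation (X : Type*) [MetricSpace X] (p : X)
    (Γ : Subgroup (X ≃ᵢ X)) (D : ℝ) (hD : 0 < D)
    (hgen : genBelow Γ p D = Γ) :
    ∀ ε : ℝ, 0 < ε →
      Subgroup.closure
          {g : X ≃ᵢ X | g ∈ Γ ∧
            d0 p g (IsometryEquiv.refl X) ≤ D + 2 * Real.sqrt 2 + ε} = Γ := by
  intro ε hε
  apply le_antisymm
  · rw [Subgroup.closure_le]
    exact fun g hg => hg.1
  · conv_lhs => rw [← hgen]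
    apply Subgroup.closure_mono
    rintro g ⟨hgΓ, hgd⟩
    exact ⟨hgΓ, le_trans (d0_le_of_dist_le p g D hgd) (by linarith)⟩
end

section
/- Let X be a proper metric space (every closed bounded subset of X is compact), p ∈ X, and Γ a pointwise-sequentially closed subgroup of the group of isometric equivalences of X. Then for all real numbers a, b with 0 < a ≤ b, the following are equivalent: (i) σ(Γ, p) ∩ (a, b] = ∅; (ii) 𝒢(Γ, p, a) = 𝒢(Γ, p, b). -/
/-- The norm spectrum `σ(Γ, p)`: the set of `r ≥ 0` such that
`𝒢(Γ, p, r) ≠ 𝒢(Γ, p, r - ε)` for every `ε > 0`. -/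
def normSpectrum {X : Type*} [MetricSpace X] (Γ : Subgroup (X ≃ᵢ X)) (p : X) :
    Set ℝ :=
  {r : ℝ | 0 ≤ r ∧ ∀ ε : ℝ, 0 < ε → genBelow Γ p r ≠ genBelow Γ p (r - ε)}

/-!
The map `r ↦ 𝒢(Γ, p, r)` is monotone. At a radius of `(a, b]` outside the spectrum it is
locally constant from the left, and at every `r > 0` it is locally constant from the right:
in a proper space, isometries with bounded displacement at `p` have pointwise convergent
subsequences whose limits are again isometric equivalences, so by closedness a generator moving
`p` slightly more than `r` is a product of generators moving `p` at most `r`. A monotone map that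
is locally constant from both sides on `[a, b]` is constant there. Conversely, if
`𝒢(Γ, p, a) = 𝒢(Γ, p, b)` the map is constant on `[a, b]`, so `(a, b]` misses the spectrum.
-/

open Filter Metric Set Topology

section PointwiseLimits

variable {X Y : Type*}

theorem Isometry.of_tendsto_apply {ι : Type*} [PseudoMetricSpace X] [PseudoMetricSpace Y]
    {l : Filter ι} [l.NeBot] {f : ι → X → Y} (hf : ∀ n, Isometry (f n)) {h : X → Y}
    (hlim : ∀ x, Tendsto (fun n => f n x) l (𝓝 (h x))) : Isometry h :=
  Isometry.of_dist_eq fun x y =>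
    tendsto_nhds_unique ((hlim x).dist (hlim y)) <| by
      simpa only [(hf _).dist_eq] using tendsto_const_nhds

theorem IsometryEquiv.tendsto_symm_apply {ι : Type*} [PseudoMetricSpace X]
    [PseudoMetricSpace Y] {l : Filter ι} {e : ι → X ≃ᵢ Y} {x : X} {y : Y}
    (h : Tendsto (fun n => e n x) l (𝓝 y)) : Tendsto (fun n => (e n).symm y) l (𝓝 x) := by
  rw [tendsto_iff_dist_tendsto_zero] at h ⊢
  have hdist : ∀ n, dist ((e n).symm y) x = dist (e n x) y := fun n => by
    rw [← (e n).dist_eq, apply_symm_apply, dist_comm]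
  simpa only [hdist] using h

/-- Equicontinuity carries Cauchy-ness from a dense set to every point. -/
theorem cauchySeq_apply_of_denseRange [PseudoMetricSpace X] [PseudoMetricSpace Y]
    {f : ℕ → X → Y} (hf : ∀ n, Isometry (f n)) {u : ℕ → X} (hu : DenseRange u)
    (hcauchy : ∀ i, CauchySeq fun n => f n (u i)) (x : X) : CauchySeq fun n => f n x := by
  refine Metric.cauchySeq_iff.2 fun ε hε => ?_
  obtain ⟨i, hi⟩ := hu.exists_dist_lt x (by positivity : 0 < ε / 3)
  obtain ⟨N, hN⟩ := Metric.cauchySeq_iff.1 (hcauchy i) (ε / 3) (by positivity)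
  refine ⟨N, fun m hm n hn => ?_⟩
  calc dist (f m x) (f n x)
      ≤ dist (f m x) (f m (u i)) + dist (f m (u i)) (f n (u i)) + dist (f n (u i)) (f n x) :=
        dist_triangle4 _ _ _ _
    _ < ε / 3 + ε / 3 + ε / 3 := by
        rw [(hf m).dist_eq, (hf n).dist_eq, dist_comm (u i)]
        gcongr
        exact hN m hm n hn
    _ = ε := by ring

/-- Pointwise precompactness of isometries with a bounded orbit: the images of a dense
sequence lie in a compact product of balls, and equicontinuity does the rest. -/
theorem exists_subseq_tendsto_apply_of_isometry [PseudoMetricSpace X]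
    [TopologicalSpace.SeparableSpace X] [MetricSpace Y] [ProperSpace Y] {f : ℕ → X → Y}
    (hf : ∀ n, Isometry (f n)) (p : X) (q : Y) (C : ℝ) (hC : ∀ n, dist (f n p) q ≤ C) :
    ∃ φ : ℕ → ℕ, StrictMono φ ∧ ∃ h : X → Y,
      ∀ x, Tendsto (fun n => f (φ n) x) atTop (𝓝 (h x)) := by
  have : Nonempty X := ⟨p⟩
  obtain ⟨u, hu⟩ := TopologicalSpace.exists_dense_seq X
  have hmem : ∀ n, (fun i => f n (u i)) ∈ univ.pi fun i => closedBall q (dist (u i) p + C) :=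
    fun n i _ => by
      calc dist (f n (u i)) q
          ≤ dist (f n (u i)) (f n p) + dist (f n p) q := dist_triangle _ _ _
        _ ≤ dist (u i) p + C := by rw [(hf n).dist_eq]; gcongr; exact hC n
  obtain ⟨y, -, φ, hφ, hconv⟩ :=
    (isCompact_univ_pi fun i => isCompact_closedBall _ _).tendsto_subseq hmem
  have hcauchy (x : X) : CauchySeq fun n => f (φ n) x :=
    cauchySeq_apply_of_denseRange (fun n => hf (φ n)) hu
      (fun i => (tendsto_pi_nhds.1 hconv i).cauchySeq) x
  choose h hh using fun x => cauchySeq_tendsto_of_complete (hcauchy x)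
  exact ⟨φ, hφ, h, hh⟩

theorem IsometryEquiv.exists_subseq_tendsto_apply [MetricSpace X] [ProperSpace X]
    [MetricSpace Y] [ProperSpace Y] {e : ℕ → X ≃ᵢ Y} (p : X) (q : Y) (C : ℝ)
    (hC : ∀ n, dist (e n p) q ≤ C) :
    ∃ φ : ℕ → ℕ, StrictMono φ ∧ ∃ h : X ≃ᵢ Y,
      ∀ x, Tendsto (fun n => e (φ n) x) atTop (𝓝 (h x)) := by
  obtain ⟨φ₁, hφ₁, h, hh⟩ :=
    exists_subseq_tendsto_apply_of_isometry (fun n => (e n).isometry) p q C hC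
  have hC' (n : ℕ) : dist ((e (φ₁ n)).symm q) p ≤ C := by
    rw [← (e (φ₁ n)).dist_eq, apply_symm_apply, dist_comm]
    exact hC _
  obtain ⟨φ₂, hφ₂, k, hk⟩ :=
    exists_subseq_tendsto_apply_of_isometry (fun n => (e (φ₁ n)).symm.isometry) q p C hC'
  have hh' (x : X) : Tendsto (fun n => e (φ₁ (φ₂ n)) x) atTop (𝓝 (h x)) :=
    (hh x).comp hφ₂.tendsto_atTop
  have hleft (x : X) : k (h x) = x :=
    tendsto_nhds_unique (hk (h x)) (IsometryEquiv.tendsto_symm_apply (hh' x))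
  have hright (y : Y) : h (k y) = y :=
    tendsto_nhds_unique (hh' (k y)) (IsometryEquiv.tendsto_symm_apply (e := fun n =>
      (e (φ₁ (φ₂ n))).symm) (hk y))
  exact ⟨φ₁ ∘ φ₂, hφ₁.comp hφ₂,
    ⟨⟨h, k, hleft, hright⟩, Isometry.of_tendsto_apply (fun n => (e _).isometry) hh'⟩, hh'⟩

end PointwiseLimits

theorem Monotone.apply_eq_of_locallyConstant_Icc {β α : Type*}
    [ConditionallyCompleteLinearOrder β] [PartialOrder α] {G : β → α} (hG : Monotone G)
    {a b : β} (hab : a ≤ b) (hleft : ∀ s ∈ Ioc a b, ∃ r < s, G s ≤ G r)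
    (hright : ∀ s ∈ Ico a b, ∃ r > s, G r ≤ G s) : G a = G b := by
  set S := {r | r ≤ b ∧ G r ≤ G a}
  have haS : a ∈ S := ⟨hab, le_rfl⟩
  have hS : BddAbove S := ⟨b, fun r hr => hr.1⟩
  set s := sSup S
  have hsa : a ≤ s := le_csSup hS haS
  have hsb : s ≤ b := csSup_le ⟨a, haS⟩ fun r hr => hr.1
  have hsS : G s ≤ G a := by
    rcases hsa.eq_or_lt with has | hlt
    · exact has ▸ le_rfl
    obtain ⟨r, hrs, hGr⟩ := hleft s ⟨hlt, hsb⟩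
    obtain ⟨r', hr'S, hrr'⟩ := exists_lt_of_lt_csSup ⟨a, haS⟩ hrs
    exact hGr.trans ((hG hrr'.le).trans hr'S.2)
  have hs_eq : s = b := by
    refine hsb.eq_or_lt.resolve_right fun hlt => ?_
    obtain ⟨r, hsr, hGr⟩ := hright s ⟨hsa, hlt⟩
    have hmin : min r b ∈ S :=
      ⟨min_le_right _ _, (hG (min_le_left _ _)).trans (hGr.trans hsS)⟩
    exact (le_csSup hS hmin).not_gt (lt_min hsr hlt)
  exact le_antisymm (hG hab) (hs_eq ▸ hsS)

section NormSpectrum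

variable {X : Type*} [MetricSpace X]

def PointwiseSeqClosed (Γ : Subgroup (X ≃ᵢ X)) : Prop :=
  ∀ g : ℕ → X ≃ᵢ X, (∀ n, g n ∈ Γ) → ∀ h : X ≃ᵢ X,
    (∀ x, Tendsto (fun n => g n x) atTop (𝓝 (h x))) → h ∈ Γ

variable (Γ : Subgroup (X ≃ᵢ X)) (p : X)

theorem genBelow_mono : Monotone (genBelow Γ p) :=
  fun _ _ h => Subgroup.closure_mono fun _ hg => ⟨hg.1, hg.2.trans h⟩

theorem mem_genBelow {g : X ≃ᵢ X} {r : ℝ} (hg : g ∈ Γ) (hgr : dist (g p) p ≤ r) :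
    g ∈ genBelow Γ p r :=
  Subgroup.subset_closure ⟨hg, hgr⟩

variable {Γ p}

/-- Writing `g n = (g n * h⁻¹) * h`, the first factor moves `p` by
`dist (g n (h⁻¹ p)) p → dist (h (h⁻¹ p)) p = 0`. -/
theorem eventually_mem_genBelow_of_tendsto {ι : Type*} {l : Filter ι} {g : ι → X ≃ᵢ X}
    (hg : ∀ n, g n ∈ Γ) {h : X ≃ᵢ X} (hΓ : h ∈ Γ)
    (hlim : ∀ x, Tendsto (fun n => g n x) l (𝓝 (h x)))
    {s : ℝ} (hs : 0 < s) (hhs : dist (h p) p ≤ s) : ∀ᶠ n in l, g n ∈ genBelow Γ p s := by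
  have hsmall : ∀ᶠ n in l, dist (g n (h⁻¹ p)) p < s := by
    have := (hlim (h⁻¹ p)).dist (tendsto_const_nhds (x := p))
    rw [IsometryEquiv.apply_inv_self, dist_self] at this
    exact this.eventually_lt_const hs
  filter_upwards [hsmall] with n hn
  simpa using mul_mem (mem_genBelow Γ p (mul_mem (hg n) (inv_mem hΓ)) hn.le)
    (mem_genBelow Γ p hΓ hhs)

/-- Otherwise elements of `Γ` outside `𝒢(Γ, p, s)` moving `p` by at most `s + 1 / (n + 1)` have
a subsequence converging to some `h ∈ Γ` moving `p` by at most `s`, and such sequences eventually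
lie in `𝒢(Γ, p, s)`. -/
theorem exists_genBelow_add_le [ProperSpace X] (hΓ : PointwiseSeqClosed Γ) {s : ℝ}
    (hs : 0 < s) : ∃ δ > 0, genBelow Γ p (s + δ) ≤ genBelow Γ p s := by
  suffices ∃ δ > 0, ∀ g ∈ Γ, dist (g p) p ≤ s + δ → g ∈ genBelow Γ p s by
    obtain ⟨δ, hδ, H⟩ := this
    exact ⟨δ, hδ, (Subgroup.closure_le _).2 fun g hg => H g hg.1 hg.2⟩
  by_contra! hcon
  choose g hgΓ hgp hgs using fun n : ℕ => hcon (1 / (n + 1)) Nat.one_div_pos_of_nat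
  have hbound (n : ℕ) : dist (g n p) p ≤ s + 1 :=
    (hgp n).trans (by gcongr; exact div_le_one_of_le₀ (by simp) (by positivity))
  obtain ⟨φ, hφ, h, hlim⟩ := IsometryEquiv.exists_subseq_tendsto_apply p p _ hbound
  have hδ : Tendsto (fun n => s + 1 / ((φ n : ℝ) + 1)) atTop (𝓝 s) := by
    simpa using (tendsto_one_div_add_atTop_nhds_zero_nat.comp hφ.tendsto_atTop).const_add s
  have hhp : dist (h p) p ≤ s :=
    le_of_tendsto_of_tendsto' ((hlim p).dist tendsto_const_nhds) hδ fun n => hgp (φ n)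
  have hhΓ : h ∈ Γ := hΓ _ (fun n => hgΓ (φ n)) h hlim
  obtain ⟨n, hn⟩ :=
    (eventually_mem_genBelow_of_tendsto (fun n => hgΓ (φ n)) hhΓ hlim hs hhp).exists
  exact hgs _ hn

end NormSpectrum

/-- **Corollary (empty spectrum).**
For a proper metric space `X`, a pointwise-sequentially closed subgroup `Γ` of
its isometry group, and `0 < a ≤ b`, the spectrum `σ(Γ, p)` misses `(a, b]` iff
`𝒢(Γ, p, a) = 𝒢(Γ, p, b)`. -/
theorem empty_spectrum (X : Type*) [MetricSpace X] [ProperSpace X] (p : X)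
    (Γ : Subgroup (X ≃ᵢ X))
    (hclosed : ∀ g : ℕ → (X ≃ᵢ X), (∀ n, g n ∈ Γ) → ∀ h : X ≃ᵢ X,
      (∀ x : X, Filter.Tendsto (fun n => g n x) Filter.atTop (nhds (h x))) →
      h ∈ Γ)
    (a b : ℝ) (ha : 0 < a) (hab : a ≤ b) :
    normSpectrum Γ p ∩ Set.Ioc a b = ∅ ↔ genBelow Γ p a = genBelow Γ p b := by
  have hmono := genBelow_mono Γ p
  constructor
  · intro hempty
    refine hmono.apply_eq_of_locallyConstant_Icc hab (fun s hs => ?_) fun s hs => ?_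
    · have hσ : s ∉ normSpectrum Γ p := fun hσ => hempty.subset ⟨hσ, hs⟩
      obtain ⟨ε, hε, hεs⟩ : ∃ ε > 0, genBelow Γ p s = genBelow Γ p (s - ε) := by
        simpa [normSpectrum, (ha.trans hs.1).le] using hσ
      exact ⟨s - ε, by linarith, hεs.le⟩
    · obtain ⟨δ, hδ, hle⟩ := exists_genBelow_add_le hclosed (ha.trans_le hs.1)
      exact ⟨s + δ, by linarith, hle⟩
  · intro heq
    refine eq_empty_of_forall_notMem fun r ⟨⟨_, hσ⟩, har, hrb⟩ =>
      hσ (r - a) (sub_pos.2 har) ?_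
    rw [sub_sub_cancel]
    exact le_antisymm (heq ▸ hmono hrb) (hmono har.le)
end

section
/- Let X be a metric space with midpoints (for all x, y ∈ X there exists z ∈ X with dist(x, z) = dist(z, y) = dist(x, y)/2), p ∈ X, Γ a subgroup of the group of isometric equivalences of X, and D ≥ 0 such that for every x ∈ X there exists g ∈ Γ with dist(g(p), x) ≤ D. Then for every ε > 0, Γ is generated by { g ∈ Γ : dist(g(p), p) ≤ 2D + ε }; in particular, every element r of the norm spectrum σ(Γ, p) satisfies r ≤ 2D. -/
/-- **Lemma (co-compact spectrum).**
Let `X` be a metric space with midpoints, `p ∈ X`, `Γ` a subgroup of the isometry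
group of `X`, and `D ≥ 0` such that every point of `X` is at distance at most `D`
from the orbit `Γ p`.  Then for every `ε > 0`, `Γ` is generated by its elements
of norm at most `2D + ε`; in particular every `r ∈ σ(Γ, p)` satisfies `r ≤ 2D`. -/
theorem cocompact_spectrum (X : Type*) [MetricSpace X]
    (hmid : ∀ x y : X, ∃ z : X,
      dist x z = dist x y / 2 ∧ dist z y = dist x y / 2)
    (p : X) (Γ : Subgroup (X ≃ᵢ X)) (D : ℝ) (hD : 0 ≤ D)
    (horbit : ∀ x : X, ∃ g : X ≃ᵢ X, g ∈ Γ ∧ dist (g p) x ≤ D) :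
    (∀ ε : ℝ, 0 < ε → genBelow Γ p (2 * D + ε) = Γ) ∧
      ∀ r ∈ normSpectrum Γ p, r ≤ 2 * D := by
  have hmain : ∀ ε : ℝ, 0 < ε → genBelow Γ p (2 * D + ε) = Γ := by
    intro ε hε
    apply le_antisymm
    · exact Subgroup.closure_le Γ |>.mpr fun g hg => hg.1
    · -- key: by induction on n, any g ∈ Γ with dist (g p) p ≤ 2D + ε + n·(ε/2)
      -- lies in the generated subgroup.
      have key : ∀ n : ℕ, ∀ g : X ≃ᵢ X, g ∈ Γ →
          dist (g p) p ≤ 2 * D + ε + n * (ε / 2) → g ∈ genBelow Γ p (2 * D + ε) := by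
        intro n
        induction n with
        | zero =>
          intro g hg hd
          exact Subgroup.subset_closure ⟨hg, by simpa using hd⟩
        | succ n ih =>
          intro g hg hd
          by_cases hsmall : dist (g p) p ≤ 2 * D + ε
          · exact Subgroup.subset_closure ⟨hg, hsmall⟩
          · push_neg at hsmall
            obtain ⟨z, hz1, hz2⟩ := hmid p (g p)
            obtain ⟨h, hhΓ, hhz⟩ := horbit z
            set d := dist (g p) p with hdd
            have hpg : dist p (g p) = d := dist_comm p (g p)
            have hhp : dist (h p) p ≤ D + d / 2 := by
              calc dist (h p) p ≤ dist (h p) z + dist z p := dist_triangle _ _ _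
                _ ≤ D + d / 2 := by
                    have : dist z p = d / 2 := by rw [dist_comm]; rw [hz1, hpg]
                    linarith
            have hinvg : dist ((h⁻¹ * g) p) p ≤ D + d / 2 := by
              have : (h⁻¹ * g) p = h⁻¹ (g p) := rfl
              rw [this]
              have : dist (h⁻¹ (g p)) p = dist (g p) (h p) := by
                rw [← h.isometry.dist_eq, IsometryEquiv.apply_inv_self]
              rw [this]
              calc dist (g p) (h p) ≤ dist (g p) z + dist z (h p) := dist_triangle _ _ _
                _ ≤ D + d / 2 := by
                    have h1 : dist (g p) z = d / 2 := by
                      rw [dist_comm, hz2, hpg]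
                    have h2 : dist z (h p) = dist (h p) z := dist_comm _ _
                    linarith
            have hbound : D + d / 2 ≤ 2 * D + ε + n * (ε / 2) := by
              have hn : (0 : ℝ) ≤ n := Nat.cast_nonneg n
              have hd' : d ≤ 2 * D + ε + (n + 1) * (ε / 2) := by
                push_cast at hd ⊢; linarith
              nlinarith
            have hmemh : h ∈ genBelow Γ p (2 * D + ε) :=
              ih h hhΓ (le_trans hhp hbound)
            have hmeminvg : (h⁻¹ * g) ∈ genBelow Γ p (2 * D + ε) :=
              ih (h⁻¹ * g) (mul_mem (inv_mem hhΓ) hg) (le_trans hinvg hbound)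
            have : g = h * (h⁻¹ * g) := by group
            rw [this]
            exact mul_mem hmemh hmeminvg
      intro g hg
      obtain ⟨n, hn⟩ := exists_nat_ge ((dist (g p) p - 2 * D - ε) / (ε / 2))
      apply key n g hg
      have hε2 : (0 : ℝ) < ε / 2 := by linarith
      have := (div_le_iff₀ hε2).mp hn
      linarith
  refine ⟨hmain, fun r hr => ?_⟩
  by_contra hlt
  push_neg at hlt
  have h1 : genBelow Γ p r = Γ := by
    have : r = 2 * D + (r - 2 * D) := by ring
    rw [this]; exact hmain _ (by linarith)
  have hε : (0 : ℝ) < (r - 2 * D) / 2 := by linarith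
  have h2 : genBelow Γ p (r - (r - 2 * D) / 2) = Γ := by
    have : r - (r - 2 * D) / 2 = 2 * D + (r - 2 * D) / 2 := by ring
    rw [this]; exact hmain _ hε
  exact hr.2 _ hε (h1.trans h2.symm)
end

section
/- Let Z be a compact metric space and m a natural number, and equip ℝ^m × Z with the L² product metric d((x, z), (x', z')) := √(‖x − x'‖² + d_Z(z, z')²), where ‖·‖ is the Euclidean norm on ℝ^m. If γ : ℝ → ℝ^m × Z satisfies d(γ(s), γ(t)) = |s − t| for all s, t ∈ ℝ (γ is an isometric embedding of the real line), then the Z-component of γ is constant, and the ℝ^m-component of γ has the form t ↦ x₀ + t·v for some x₀ ∈ ℝ^m and some v ∈ ℝ^m with ‖v‖ = 1. -/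
open scoped InnerProductSpace

set_option maxHeartbeats 1000000


/-- The `L²` product metric on `ℝ^m × Z`:
`d((x,z),(x',z')) = √(‖x - x'‖² + d_Z(z,z')²)`. -/
noncomputable def l2dist {m : ℕ} {Z : Type*} [MetricSpace Z]
    (p q : EuclideanSpace ℝ (Fin m) × Z) : ℝ :=
  Real.sqrt (dist p.1 q.1 ^ 2 + dist p.2 q.2 ^ 2)

/-- **Geodesic lines in `ℝ^m × Z` with `Z` compact lie in Euclidean fibers**
(claim underlying the proof of Corollary 'fybc'): if
`γ : ℝ → ℝ^m × Z` is an isometric embedding of the real line for the `L²`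
product metric, then its `Z`-component is constant and its `ℝ^m`-component is
an affine line `t ↦ x₀ + t • v` with `‖v‖ = 1`. -/
theorem line_in_product_lies_in_fiber (m : ℕ) (Z : Type*) [MetricSpace Z]
    [CompactSpace Z] (γ : ℝ → EuclideanSpace ℝ (Fin m) × Z)
    (hγ : ∀ s t : ℝ, l2dist (γ s) (γ t) = |s - t|) :
    (∀ s t : ℝ, (γ s).2 = (γ t).2) ∧
      ∃ (x₀ v : EuclideanSpace ℝ (Fin m)), ‖v‖ = 1 ∧
        ∀ t : ℝ, (γ t).1 = x₀ + t • v := by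
  -- squared form of the hypothesis
  have hsq : ∀ s t : ℝ, dist (γ s).1 (γ t).1 ^ 2 + dist (γ s).2 (γ t).2 ^ 2 = (s - t) ^ 2 := by
    intro s t
    have h := hγ s t
    have h0 : (0:ℝ) ≤ dist (γ s).1 (γ t).1 ^ 2 + dist (γ s).2 (γ t).2 ^ 2 := by positivity
    have h2 := congrArg (· ^ 2) h
    simp only [l2dist] at h2
    rw [Real.sq_sqrt h0] at h2
    rw [h2, sq_abs]
  -- key proportionality lemma
  have key : ∀ s u t : ℝ, s < u → u < t →
      dist (γ s).2 (γ u).2 * (t - u) = dist (γ u).2 (γ t).2 * (u - s) := by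
    intro s u t hsu hut
    set A1 := dist (γ s).1 (γ u).1 with hA1def
    set B1 := dist (γ s).2 (γ u).2 with hB1def
    set A2 := dist (γ u).1 (γ t).1 with hA2def
    set B2 := dist (γ u).2 (γ t).2 with hB2def
    set A := dist (γ s).1 (γ t).1 with hAdef
    set B := dist (γ s).2 (γ t).2 with hBdef
    have h1 : A1 ^ 2 + B1 ^ 2 = (u - s) ^ 2 := by
      have h := hsq s u; linear_combination h
    have h2 : A2 ^ 2 + B2 ^ 2 = (t - u) ^ 2 := by
      have h := hsq u t; linear_combination h
    have h3 : A ^ 2 + B ^ 2 = (t - s) ^ 2 := by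
      have h := hsq s t; linear_combination h
    have tA : A ≤ A1 + A2 := dist_triangle _ _ _
    have tB : B ≤ B1 + B2 := dist_triangle _ _ _
    have nA1 : 0 ≤ A1 := dist_nonneg
    have nB1 : 0 ≤ B1 := dist_nonneg
    have nA2 : 0 ≤ A2 := dist_nonneg
    have nB2 : 0 ≤ B2 := dist_nonneg
    have nA : 0 ≤ A := dist_nonneg
    have nB : 0 ≤ B := dist_nonneg
    clear_value A1 B1 A2 B2 A B
    have hp : (0:ℝ) < u - s := sub_pos.2 hsu
    have hq : (0:ℝ) < t - u := sub_pos.2 hut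
    -- Cauchy–Schwarz
    have hcsq : (A1 * A2 + B1 * B2) ^ 2 ≤ ((u - s) * (t - u)) ^ 2 := by
      nlinarith [sq_nonneg (A1 * B2 - A2 * B1), h1, h2, sq_nonneg A1, sq_nonneg B2]
    have hc0 : 0 ≤ A1 * A2 + B1 * B2 := by positivity
    have cs : A1 * A2 + B1 * B2 ≤ (u - s) * (t - u) :=
      le_of_pow_le_pow_left₀ two_ne_zero (le_of_lt (mul_pos hp hq)) hcsq
    -- reverse inequality from the triangle inequalities
    have hA2sq : A ^ 2 ≤ (A1 + A2) ^ 2 := pow_le_pow_left₀ nA tA 2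
    have hB2sq : B ^ 2 ≤ (B1 + B2) ^ 2 := pow_le_pow_left₀ nB tB 2
    have eA : (A1 + A2) ^ 2 = A1 ^ 2 + 2 * (A1 * A2) + A2 ^ 2 := by ring
    have eB : (B1 + B2) ^ 2 = B1 ^ 2 + 2 * (B1 * B2) + B2 ^ 2 := by ring
    have hge : (u - s) * (t - u) ≤ A1 * A2 + B1 * B2 := by
      rw [eA] at hA2sq; rw [eB] at hB2sq
      nlinarith [hA2sq, hB2sq, h1, h2, h3]
    have hc : A1 * A2 + B1 * B2 = (u - s) * (t - u) := le_antisymm cs hge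
    -- equality in Cauchy–Schwarz gives proportionality
    have hdet0 : (A1 * B2 - A2 * B1) ^ 2 = 0 := by
      have hid : (A1 * B2 - A2 * B1) ^ 2
          = (A1 ^ 2 + B1 ^ 2) * (A2 ^ 2 + B2 ^ 2) - (A1 * A2 + B1 * B2) ^ 2 := by ring
      rw [hid, h1, h2, hc]; ring
    have hdet : A1 * B2 = A2 * B1 := by
      have := pow_eq_zero_iff (n := 2) (by norm_num) |>.mp hdet0
      linarith
    have hsq2 : (B1 * (t - u)) ^ 2 = (B2 * (u - s)) ^ 2 := by
      linear_combination (-(B1 ^ 2)) * h2 + B2 ^ 2 * h1 - (A2 * B1 + A1 * B2) * hdet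
    have hx : 0 ≤ B1 * (t - u) := by positivity
    have hy : 0 ≤ B2 * (u - s) := by positivity
    exact le_antisymm (le_of_pow_le_pow_left₀ two_ne_zero hy hsq2.le)
      (le_of_pow_le_pow_left₀ two_ne_zero hx hsq2.ge)
  -- Z-component is constant
  have hconst : ∀ s t : ℝ, (γ s).2 = (γ t).2 := by
    have main : ∀ s t : ℝ, s < t → (γ s).2 = (γ t).2 := by
      intro s t hst
      by_contra hne
      have hd : 0 < dist (γ s).2 (γ t).2 := dist_pos.2 hne
      set d := dist (γ s).2 (γ t).2 with hddef
      set D := Metric.diam (Set.univ : Set Z) with hDdef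
      have hD : ∀ a b : Z, dist a b ≤ D := fun a b =>
        Metric.dist_le_diam_of_mem isCompact_univ.isBounded (Set.mem_univ a) (Set.mem_univ b)
      have hD0 : 0 ≤ D := Metric.diam_nonneg
      have hst' : (0:ℝ) < t - s := sub_pos.2 hst
      set T := t + (t - s) * (D + 1) / d with hTdef
      have hTt : T - t = (t - s) * (D + 1) / d := by rw [hTdef]; ring
      have hpos : 0 < (t - s) * (D + 1) / d := by
        apply div_pos (mul_pos hst' (by linarith)) hd
      have hdT : t < T := by rw [hTdef]; linarith
      have hk := key s t T hst hdT
      -- d * (T - t) = dist z_t z_T * (t - s)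
      have h1 : d * (T - t) = (D + 1) * (t - s) := by
        rw [hTt]; field_simp
      have h2 : dist (γ t).2 (γ T).2 * (t - s) = (D + 1) * (t - s) := by
        rw [← h1, ← hk]
      have h3 : dist (γ t).2 (γ T).2 = D + 1 :=
        mul_right_cancel₀ (ne_of_gt hst') h2
      have := hD (γ t).2 (γ T).2
      linarith
    intro s t
    rcases lt_trichotomy s t with h | h | h
    · exact main s t h
    · rw [h]
    · exact (main t s h).symm
  -- the Euclidean component is a unit-speed line
  have hdist1 : ∀ a b : ℝ, ‖(γ a).1 - (γ b).1‖ = |a - b| := by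
    intro a b
    have h := hsq a b
    rw [hconst a b] at h
    simp only [dist_self] at h
    have h' : dist (γ a).1 (γ b).1 ^ 2 = (a - b) ^ 2 := by linarith [h]
    rw [dist_eq_norm] at h'
    rw [← Real.sqrt_sq (norm_nonneg _), h', Real.sqrt_sq_eq_abs]
  refine ⟨hconst, (γ 0).1, (γ 1).1 - (γ 0).1, ?_, ?_⟩
  · have := hdist1 1 0
    simpa using this
  · intro t
    have e0 : ‖(γ t).1 - (γ 0).1‖ = |t| := by simpa using hdist1 t 0
    have e1 : ‖(γ t).1 - (γ 1).1‖ = |t - 1| := hdist1 t 1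
    have e01 : ‖(γ 1).1 - (γ 0).1‖ = 1 := by simpa using hdist1 1 0
    set a : EuclideanSpace ℝ (Fin m) := (γ t).1 - (γ 0).1 with hadef
    set v : EuclideanSpace ℝ (Fin m) := (γ 1).1 - (γ 0).1 with hvdef
    have hav : a - v = (γ t).1 - (γ 1).1 := by rw [hadef, hvdef]; abel
    have hinner : ⟪a, v⟫_ℝ = t := by
      have expand : ‖a - v‖ ^ 2 = ‖a‖ ^ 2 - 2 * ⟪a, v⟫_ℝ + ‖v‖ ^ 2 := norm_sub_sq_real a v
      rw [hav, e1, e01, e0] at expand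
      have h1 : |t - 1| ^ 2 = (t - 1) ^ 2 := sq_abs _
      have h2 : |t| ^ 2 = t ^ 2 := sq_abs _
      nlinarith [expand, h1, h2]
    have hzero : ‖a - t • v‖ ^ 2 = 0 := by
      have expand : ‖a - t • v‖ ^ 2 = ‖a‖ ^ 2 - 2 * ⟪a, t • v⟫_ℝ + ‖t • v‖ ^ 2 :=
        norm_sub_sq_real a (t • v)
      rw [real_inner_smul_right, hinner, norm_smul, e01, e0] at expand
      simp only [Real.norm_eq_abs, mul_one] at expand
      have h2 : |t| ^ 2 = t ^ 2 := sq_abs _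
      nlinarith [expand, h2]
    have hav0 : a - t • v = 0 := by
      have := pow_eq_zero_iff (n := 2) (by norm_num) |>.mp hzero
      exact norm_eq_zero.mp this
    have : a = t • v := sub_eq_zero.mp hav0
    rw [hadef] at this
    rw [sub_eq_iff_eq_add] at this
    rw [this]; abel
end

section
/- Let Z be a compact metric space and m a natural number, and equip ℝ^m × Z with the L² product metric d((x, z), (x', z')) := √(‖x − x'‖² + d_Z(z, z')²), where ‖·‖ is the Euclidean norm on ℝ^m. Then every isometric equivalence f of ℝ^m × Z splits as a product: there exist an isometric equivalence g of Euclidean ℝ^m and an isometric equivalence h of Z such that f(x, z) = (g(x), h(z)) for all (x, z) ∈ ℝ^m × Z. -/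
open scoped RealInnerProductSpace

namespace SplitAux

variable {m : ℕ} {Z : Type*} [MetricSpace Z]

local notation "E" => EuclideanSpace ℝ (Fin m)

lemma l2dist_same_snd (p q : E × Z) (h : p.2 = q.2) : l2dist p q = dist p.1 q.1 := by
  unfold l2dist
  rw [h, dist_self]
  simp [Real.sqrt_sq dist_nonneg]

/-- `q` can be "extended beyond" arbitrarily far from `p`. -/
def Ext (p q : E × Z) : Prop :=
  ∀ t : ℝ, 0 < t → ∃ r, l2dist p r = l2dist p q + t ∧ l2dist q r = t

lemma ext_of_same_snd {p q : E × Z} (hz : p.2 = q.2) (hne : p ≠ q) : Ext p q := by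
  intro t ht
  have hx : p.1 ≠ q.1 := fun h => hne (Prod.ext h hz)
  set v : E := q.1 - p.1 with hvdef
  have hv0 : v ≠ 0 := sub_ne_zero.mpr (Ne.symm hx)
  have hnv : 0 < ‖v‖ := norm_pos_iff.mpr hv0
  refine ⟨(q.1 + (t / ‖v‖) • v, q.2), ?_, ?_⟩
  · rw [l2dist_same_snd _ _ hz, l2dist_same_snd p (q.1 + (t / ‖v‖) • v, q.2) hz]
    have h1 : p.1 - (q.1 + (t / ‖v‖) • v) = -((1 + t / ‖v‖) • v) := by
      rw [hvdef]; module
    rw [dist_eq_norm, dist_eq_norm, h1, norm_neg, norm_smul]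
    have : ‖p.1 - q.1‖ = ‖v‖ := by rw [hvdef, norm_sub_rev]
    rw [this]
    have hpos : (0:ℝ) < 1 + t / ‖v‖ := by positivity
    rw [Real.norm_eq_abs, abs_of_pos hpos]
    field_simp
  · rw [l2dist_same_snd (q.1, q.2) (q.1 + (t / ‖v‖) • v, q.2) rfl]
    have h1 : q.1 - (q.1 + (t / ‖v‖) • v) = -((t / ‖v‖) • v) := by module
    rw [dist_eq_norm, h1, norm_neg, norm_smul, Real.norm_eq_abs,
      abs_of_pos (by positivity : (0:ℝ) < t / ‖v‖)]
    field_simp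

set_option maxHeartbeats 1000000 in
lemma same_snd_of_ext [CompactSpace Z] {p q : E × Z} (h : Ext p q) : p.2 = q.2 := by
  by_contra hzz
  obtain ⟨D, hD⟩ : ∃ D, ∀ z z' : Z, dist z z' ≤ D := by
    obtain ⟨C, hC⟩ := Metric.isBounded_iff.mp (isCompact_univ (X := Z)).isBounded
    exact ⟨C, fun z z' => hC (Set.mem_univ z) (Set.mem_univ z')⟩
  have hD0 : 0 ≤ D := le_trans dist_nonneg (hD p.2 p.2)
  set a := dist p.1 q.1 with ha
  set b := dist p.2 q.2 with hbdef
  have hb : 0 < b := dist_pos.mpr hzz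
  have ha0 : 0 ≤ a := dist_nonneg
  set t := a * D / b + D + 1 with htdef
  have hdiv : 0 ≤ a * D / b := div_nonneg (mul_nonneg ha0 hD0) hb.le
  have ht : 0 < t := by rw [htdef]; linarith
  obtain ⟨r, h1, h2⟩ := h t ht
  set c := dist q.1 r.1 with hc
  set e := dist q.2 r.2 with he
  have hc0 : 0 ≤ c := dist_nonneg
  have he0 : 0 ≤ e := dist_nonneg
  set S := l2dist p q with hS
  have hS0 : 0 ≤ S := Real.sqrt_nonneg _
  have hSsq : S ^ 2 = a ^ 2 + b ^ 2 := by
    rw [hS]; unfold l2dist; rw [Real.sq_sqrt (add_nonneg (sq_nonneg _) (sq_nonneg _))]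
  have htsq : c ^ 2 + e ^ 2 = t ^ 2 := by
    rw [← h2]; unfold l2dist; rw [Real.sq_sqrt (add_nonneg (sq_nonneg _) (sq_nonneg _))]
  have hA : dist p.1 r.1 ^ 2 + dist p.2 r.2 ^ 2 = (S + t) ^ 2 := by
    rw [← h1]; unfold l2dist; rw [Real.sq_sqrt (add_nonneg (sq_nonneg _) (sq_nonneg _))]
  have htri1 : dist p.1 r.1 ≤ a + c := dist_triangle p.1 q.1 r.1
  have htri2 : dist p.2 r.2 ≤ b + e := dist_triangle p.2 q.2 r.2
  -- (S+t)^2 ≤ (a+c)^2 + (b+e)^2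
  have hup : (S + t) ^ 2 ≤ (a + c) ^ 2 + (b + e) ^ 2 := by
    rw [← hA]
    have h1' : 0 ≤ dist p.1 r.1 := dist_nonneg
    have h2' : 0 ≤ dist p.2 r.2 := dist_nonneg
    nlinarith [htri1, htri2]
  -- hence S * t ≤ a*c + b*e
  have hSt : S * t ≤ a * c + b * e := by nlinarith [hSsq, htsq]
  -- Cauchy-Schwarz: (a*c+b*e)^2 ≤ (a^2+b^2)(c^2+e^2) = (S*t)^2
  have hCS : (a * c + b * e) ^ 2 ≤ (S * t) ^ 2 := by
    have : (a * c + b * e) ^ 2 ≤ (a ^ 2 + b ^ 2) * (c ^ 2 + e ^ 2) := by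
      nlinarith [sq_nonneg (a * e - b * c)]
    calc (a * c + b * e) ^ 2 ≤ (a ^ 2 + b ^ 2) * (c ^ 2 + e ^ 2) := this
      _ = (S * t) ^ 2 := by rw [mul_pow, hSsq, htsq]
  have habe : 0 ≤ a * c + b * e := add_nonneg (mul_nonneg ha0 hc0) (mul_nonneg hb.le he0)
  have hSt0 : 0 ≤ S * t := mul_nonneg hS0 ht.le
  have heq : a * c + b * e = S * t :=
    le_antisymm ((pow_le_pow_iff_left₀ habe hSt0 two_ne_zero).mp hCS) hSt
  have heq2 : (a * c + b * e) ^ 2 = (a ^ 2 + b ^ 2) * (c ^ 2 + e ^ 2) := by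
    rw [heq, mul_pow, hSsq, htsq]
  have haebc : a * e = b * c := by
    have h0 : (a * e - b * c) ^ 2 = 0 := by linear_combination -heq2
    have := pow_eq_zero_iff (n := 2) two_ne_zero |>.mp h0
    linarith
  -- bounds
  have heD : e ≤ D := hD _ _
  have _dummy : True := trivial
  have hcb : c ≤ a * D / b := by
    rw [le_div_iff₀ hb]
    calc c * b = a * e := by linear_combination -haebc
      _ ≤ a * D := mul_le_mul_of_nonneg_left heD ha0
  have htce : t ≤ c + e := by nlinarith [htsq, mul_nonneg hc0 he0]
  clear_value t a b c e S
  linarith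


lemma inner_of_isometry {φ : E → E} (hφ : ∀ x y, dist (φ x) (φ y) = dist x y) (x y : E) :
    ⟪φ x - φ 0, φ y - φ 0⟫ = ⟪x, y⟫ := by
  have h1 : ‖φ x - φ 0‖ = ‖x‖ := by rw [← dist_eq_norm, hφ, dist_zero_right]
  have h2 : ‖φ y - φ 0‖ = ‖y‖ := by rw [← dist_eq_norm, hφ, dist_zero_right]
  have h3 : ‖(φ x - φ 0) - (φ y - φ 0)‖ = ‖x - y‖ := by
    have : (φ x - φ 0) - (φ y - φ 0) = φ x - φ y := by abel
    rw [this, ← dist_eq_norm, hφ, dist_eq_norm]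
  have e1 := @norm_sub_sq_real (EuclideanSpace ℝ (Fin m)) _ _ (φ x - φ 0) (φ y - φ 0)
  have e2 := @norm_sub_sq_real (EuclideanSpace ℝ (Fin m)) _ _ x y
  rw [h1, h2, h3] at e1
  linarith

/-- Rigidity: two surjective isometries of Euclidean space at constant squared
"defect" `K` from each other coincide, and `K = 0`. -/
lemma rigidity {φ ψ : E → E} (hφ : ∀ x y, dist (φ x) (φ y) = dist x y)
    (hψ : ∀ x y, dist (ψ x) (ψ y) = dist x y) (hφs : Function.Surjective φ) {K : ℝ}
    (hK : ∀ x x', dist (φ x) (ψ x') ^ 2 = dist x x' ^ 2 + K) :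
    K = 0 ∧ ∀ x, φ x = ψ x := by
  set c : E := φ 0 - ψ 0 with hcdef
  have hc0 : ‖c‖ ^ 2 = K := by
    have := hK 0 0
    rw [dist_self, dist_eq_norm, zero_pow two_ne_zero, zero_add] at this
    rw [hcdef]; exact this
  have hinner0 : ∀ x, ⟪φ x - φ 0, c⟫ = 0 := by
    intro x
    have hKx := hK x 0
    have hsplit : φ x - ψ 0 = (φ x - φ 0) + c := by rw [hcdef]; abel
    rw [dist_eq_norm, hsplit] at hKx
    have hexp := @norm_add_sq_real (EuclideanSpace ℝ (Fin m)) _ _ (φ x - φ 0) c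
    have hnx : ‖φ x - φ 0‖ = ‖x‖ := by rw [← dist_eq_norm, hφ, dist_zero_right]
    rw [hnx] at hexp
    rw [dist_zero_right] at hKx
    linarith
  have hceq : c = 0 := by
    obtain ⟨x, hx⟩ := hφs (c + φ 0)
    have := hinner0 x
    rw [hx] at this
    have : ⟪c, c⟫ = 0 := by simpa using this
    exact inner_self_eq_zero.mp this
  have hK0 : K = 0 := by rw [← hc0, hceq]; simp
  refine ⟨hK0, fun x' => ?_⟩
  have hψ0 : ψ 0 = φ 0 := (sub_eq_zero.mp hceq).symm
  have hinner2 : ∀ x, ⟪φ x - φ 0, ψ x' - φ 0⟫ = ⟪x, x'⟫ := by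
    intro x
    have hKx := hK x x'
    rw [hK0, add_zero, dist_eq_norm, dist_eq_norm] at hKx
    have hsplit : φ x - ψ x' = (φ x - φ 0) - (ψ x' - φ 0) := by abel
    rw [hsplit] at hKx
    have hexp := @norm_sub_sq_real (EuclideanSpace ℝ (Fin m)) _ _ (φ x - φ 0) (ψ x' - φ 0)
    have hexp2 := @norm_sub_sq_real (EuclideanSpace ℝ (Fin m)) _ _ x x'
    have hnx : ‖φ x - φ 0‖ = ‖x‖ := by rw [← dist_eq_norm, hφ, dist_zero_right]
    have hnx' : ‖ψ x' - φ 0‖ = ‖x'‖ := by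
      rw [← hψ0, ← dist_eq_norm, hψ, dist_zero_right]
    rw [hnx, hnx'] at hexp
    linarith
  have hfinal : ∀ x, ⟪φ x - φ 0, φ x' - ψ x'⟫ = 0 := by
    intro x
    have h1 := inner_of_isometry hφ x x'
    have h2 := hinner2 x
    have : φ x' - ψ x' = (φ x' - φ 0) - (ψ x' - φ 0) := by abel
    rw [this, inner_sub_right]
    linarith
  obtain ⟨x, hx⟩ := hφs ((φ x' - ψ x') + φ 0)
  have := hfinal x
  rw [hx] at this
  have hz : ⟪φ x' - ψ x', φ x' - ψ x'⟫ = (0:ℝ) := by simpa using this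
  exact sub_eq_zero.mp (inner_self_eq_zero.mp hz)

end SplitAux


/-- **Isometries of `ℝ^m × Z` split** (claim from the proof of Corollary
'fybc'): every isometric equivalence of `ℝ^m × Z` (with `Z` compact, for the
`L²` product metric) is a product of an isometric equivalence of Euclidean
`ℝ^m` and an isometric equivalence of `Z`. -/
theorem isometry_of_product_splits (m : ℕ) (Z : Type*) [MetricSpace Z]
    [CompactSpace Z]
    (f : (EuclideanSpace ℝ (Fin m) × Z) ≃ (EuclideanSpace ℝ (Fin m) × Z))
    (hf : ∀ p q : EuclideanSpace ℝ (Fin m) × Z, l2dist (f p) (f q) = l2dist p q) :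
    ∃ (g : EuclideanSpace ℝ (Fin m) ≃ᵢ EuclideanSpace ℝ (Fin m)) (h : Z ≃ᵢ Z),
      ∀ (x : EuclideanSpace ℝ (Fin m)) (z : Z), f (x, z) = (g x, h z) := by
  classical
  obtain hZ | hZ := isEmpty_or_nonempty Z
  · exact ⟨IsometryEquiv.refl _, IsometryEquiv.refl _, fun x z => (IsEmpty.false z).elim⟩
  have hf' : ∀ p q, l2dist (f.symm p) (f.symm q) = l2dist p q := by
    intro p q
    have := hf (f.symm p) (f.symm q)
    rw [f.apply_symm_apply, f.apply_symm_apply] at this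
    exact this.symm
  -- any l2dist-preserving bijection preserves the fibers of the second projection
  have key : ∀ (F : (EuclideanSpace ℝ (Fin m) × Z) ≃ (EuclideanSpace ℝ (Fin m) × Z)),
      (∀ p q, l2dist (F p) (F q) = l2dist p q) →
      ∀ p q : EuclideanSpace ℝ (Fin m) × Z, p.2 = q.2 → (F p).2 = (F q).2 := by
    intro F hF p q h2
    rcases eq_or_ne p q with rfl | hne
    · rfl
    have hE : SplitAux.Ext p q := SplitAux.ext_of_same_snd h2 hne
    have hE' : SplitAux.Ext (F p) (F q) := by
      intro t ht
      obtain ⟨r, h1, h2'⟩ := hE t ht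
      refine ⟨F r, ?_, ?_⟩
      · rw [hF p r, hF p q]; exact h1
      · rw [hF q r]; exact h2'
    exact SplitAux.same_snd_of_ext hE'
  -- the induced maps on Z
  set h0 : Z → Z := fun z => (f ((0 : EuclideanSpace ℝ (Fin m)), z)).2 with h0def
  set h0' : Z → Z := fun z => (f.symm ((0 : EuclideanSpace ℝ (Fin m)), z)).2 with h0'def
  have hfs : ∀ (x : EuclideanSpace ℝ (Fin m)) z, (f (x, z)).2 = h0 z :=
    fun x z => key f hf (x, z) (0, z) rfl
  have hli : ∀ z, h0' (h0 z) = z := by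
    intro z
    have := key f.symm hf' ((0 : EuclideanSpace ℝ (Fin m)), h0 z) (f (0, z)) rfl
    rw [f.symm_apply_apply] at this
    exact this
  have hri : ∀ z, h0 (h0' z) = z := by
    intro z
    have := key f hf ((0 : EuclideanSpace ℝ (Fin m)), h0' z) (f.symm (0, z)) rfl
    rw [f.apply_symm_apply] at this
    exact this
  -- the induced maps on ℝ^m, fiberwise
  set g0 : Z → EuclideanSpace ℝ (Fin m) → EuclideanSpace ℝ (Fin m) :=
    fun z x => (f (x, z)).1 with g0def
  have hgdist : ∀ z x x', dist (g0 z x) (g0 z x') = dist x x' := by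
    intro z x x'
    have h1 := hf (x, z) (x', z)
    rw [SplitAux.l2dist_same_snd ((x, z) : EuclideanSpace ℝ (Fin m) × Z) (x', z) rfl] at h1
    rw [SplitAux.l2dist_same_snd (f (x, z)) (f (x', z)) (by rw [hfs, hfs])] at h1
    exact h1
  have hgri : ∀ z y, g0 z (f.symm (y, h0 z)).1 = y := by
    intro z y
    have hp2 : (f.symm (y, h0 z)).2 = z := by
      have := key f.symm hf' (y, h0 z) (f (0, z)) rfl
      rw [f.symm_apply_apply] at this
      exact this
    show (f ((f.symm (y, h0 z)).1, z)).1 = y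
    have hpe : ((f.symm (y, h0 z)).1, z) = f.symm (y, h0 z) := Prod.ext rfl hp2.symm
    rw [hpe, f.apply_symm_apply]
  have hgsurj : ∀ z, Function.Surjective (g0 z) := fun z y => ⟨_, hgri z y⟩
  -- the master equation
  have E1 : ∀ (z z' : Z) (x x' : EuclideanSpace ℝ (Fin m)),
      dist (g0 z x) (g0 z' x') ^ 2 + dist (h0 z) (h0 z') ^ 2
        = dist x x' ^ 2 + dist z z' ^ 2 := by
    intro z z' x x'
    have h1 := hf (x, z) (x', z')
    unfold l2dist at h1
    have h2 : dist (f (x, z)).1 (f (x', z')).1 ^ 2 + dist (f (x, z)).2 (f (x', z')).2 ^ 2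
        = dist x x' ^ 2 + dist z z' ^ 2 := by
      have hA := Real.sq_sqrt (add_nonneg (sq_nonneg (dist (f (x, z)).1 (f (x', z')).1))
        (sq_nonneg (dist (f (x, z)).2 (f (x', z')).2)))
      have hB := Real.sq_sqrt (add_nonneg (sq_nonneg (dist x x'))
        (sq_nonneg (dist (z : Z) z')))
      rw [← hA, ← hB, h1]
    rw [hfs x z, hfs x' z'] at h2
    exact h2
  -- SplitAux.rigidity: g0 is independent of z, h0 is an isometry
  have hrig : ∀ z z', (dist z z' ^ 2 - dist (h0 z) (h0 z') ^ 2 = 0)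
      ∧ ∀ x, g0 z x = g0 z' x := by
    intro z z'
    exact SplitAux.rigidity (hgdist z) (hgdist z') (hgsurj z)
      (fun x x' => by have := E1 z z' x x'; linarith)
  have hhdist : ∀ z z', dist (h0 z) (h0 z') = dist z z' := by
    intro z z'
    have h1 := (hrig z z').1
    have h2 : dist (h0 z) (h0 z') ^ 2 = dist z z' ^ 2 := by linarith
    rw [← Real.sqrt_sq (dist_nonneg (x := h0 z) (y := h0 z')),
      ← Real.sqrt_sq (dist_nonneg (x := z) (y := z')), h2]
  obtain ⟨z₀⟩ := hZ
  refine ⟨IsometryEquiv.mk' (g0 z₀) (fun y => (f.symm (y, h0 z₀)).1)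
      (hgri z₀) (Isometry.of_dist_eq (hgdist z₀)),
    IsometryEquiv.mk' h0 h0' hri (Isometry.of_dist_eq hhdist), fun x z => ?_⟩
  show f (x, z) = (g0 z₀ x, h0 z)
  exact Prod.ext ((hrig z z₀).2 x) (hfs x z)
end

section
/- For each i ∈ ℕ, let (X_i, d_i) be a metric space with a Borel measure μ_i and a base point p_i ∈ X_i, such that every open ball in every X_i has positive finite measure, and suppose there is a function C : (0, ∞) → [1, ∞) with μ_i(B_{2r}(x)) ≤ C(R) · μ_i(B_r(x)) for all i ∈ ℕ, all x ∈ X_i, all R > 0 and all 0 < r ≤ R. Let U_i ⊆ X_i be Borel sets. Then the following are equivalent: (1) for every R > 0, μ_i(U_i ∩ B_R(p_i)) / μ_i(B_R(p_i)) → 1 as i → ∞; (2) for all real numbers R > δ > 0, there is a sequence ε_i → 0 such that for every i and every x ∈ B_R(p_i), μ_i(U_i ∩ B_δ(x)) ≥ (1 − ε_i) · μ_i(B_δ(x)). -/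
open MeasureTheory Metric Filter Topology ENNReal NNReal

/-!
Direction (2) ⇒ (1) is the case `x = pᵢ`, `δ = R`. For (1) ⇒ (2), fix `k` with `2ᵏδ ≥ 2R + δ`;
for `x ∈ B_R(pᵢ)` we have `B_δ(x) ⊆ B_{R+δ}(pᵢ) ⊆ B_{2ᵏδ}(x)`, so `k` doublings give
`μᵢ(B_{R+δ}(pᵢ)) ≤ C(2ᵏδ)ᵏ μᵢ(B_δ(x))`. Hence the mass of `B_δ(x)` missed by `Uᵢ` is at most
`C(2ᵏδ)ᵏ` times the relative mass of `B_{R+δ}(pᵢ)` missed by `Uᵢ`, which tends to `0` by (1).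
-/

theorem ENNReal.tendsto_const_mul_one_sub {ι : Type*} {l : Filter ι} {f : ι → ℝ≥0∞} {K : ℝ≥0∞}
    (hf : Tendsto f l (𝓝 1)) (hK : K ≠ ∞) : Tendsto (fun i => K * (1 - f i)) l (𝓝 0) := by
  have hdefect := ENNReal.Tendsto.sub tendsto_const_nhds hf (.inl one_ne_top)
  simpa only [tsub_self, mul_zero] using ENNReal.Tendsto.const_mul hdefect (.inr hK)

section Density

variable {α : Type*} [MeasurableSpace α] {μ : Measure α} {U A B : Set α}

theorem measure_sdiff_eq_one_sub_div_mul (hU : MeasurableSet U) (hB : μ B ≠ ∞) :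
    μ (B \ U) = (1 - μ (U ∩ B) / μ B) * μ B := by
  by_cases hB0 : μ B = 0
  · rw [hB0, mul_zero]
    exact measure_mono_null Set.sdiff_subset hB0
  have hsplit := measure_inter_add_sdiff (μ := μ) B hU
  rw [Set.inter_comm, add_comm] at hsplit
  rw [ENNReal.sub_mul fun _ _ => hB, one_mul, ENNReal.div_mul_cancel hB0 hB]
  exact ENNReal.eq_sub_of_add_eq' hB hsplit

theorem one_sub_mul_measure_le_measure_inter (hU : MeasurableSet U) (hAB : A ⊆ B)
    (hB : μ B ≠ ∞) {K : ℝ≥0∞} (hK : μ B ≤ K * μ A) :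
    (1 - K * (1 - μ (U ∩ B) / μ B)) * μ A ≤ μ (U ∩ A) := by
  have hA : μ A ≠ ∞ := ne_top_of_le_ne_top hB (measure_mono hAB)
  have hmissed : μ (A \ U) ≤ K * (1 - μ (U ∩ B) / μ B) * μ A :=
    calc μ (A \ U) ≤ μ (B \ U) := measure_mono (Set.sdiff_subset_sdiff_left hAB)
      _ = (1 - μ (U ∩ B) / μ B) * μ B := measure_sdiff_eq_one_sub_div_mul hU hB
      _ ≤ (1 - μ (U ∩ B) / μ B) * (K * μ A) := by gcongr
      _ = K * (1 - μ (U ∩ B) / μ B) * μ A := by ring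
  have hsplit : μ A ≤ μ (U ∩ A) + μ (A \ U) := by
    simpa only [Set.inter_comm] using measure_le_inter_add_sdiff μ A U
  rw [ENNReal.sub_mul fun _ _ => hA, one_mul, tsub_le_iff_right]
  exact hsplit.trans (add_le_add_right hmissed _)

end Density

section Doubling

variable {X : Type*} [PseudoMetricSpace X] [MeasurableSpace X]

def DoublingUpTo (μ : Measure X) (c : ℝ≥0∞) (R₀ : ℝ) : Prop :=
  ∀ (x : X) (r : ℝ), 0 < r → r ≤ R₀ → μ (ball x (2 * r)) ≤ c * μ (ball x r)

variable {μ : Measure X} {c : ℝ≥0∞} {R₀ : ℝ}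

theorem DoublingUpTo.measure_ball_two_pow_mul_le (hμ : DoublingUpTo μ c R₀) (x : X) {δ : ℝ}
    (hδ : 0 < δ) {k : ℕ} (hk : 2 ^ k * δ ≤ R₀) :
    μ (ball x (2 ^ k * δ)) ≤ c ^ k * μ (ball x δ) := by
  induction k with
  | zero => simp
  | succ k ih =>
    have hk' : 2 ^ k * δ ≤ R₀ :=
      le_trans (by gcongr <;> norm_num) hk
    calc μ (ball x (2 ^ (k + 1) * δ)) = μ (ball x (2 * (2 ^ k * δ))) := by ring_nf
      _ ≤ c * μ (ball x (2 ^ k * δ)) := hμ x _ (by positivity) hk'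
      _ ≤ c * (c ^ k * μ (ball x δ)) := by gcongr; exact ih hk'
      _ = c ^ (k + 1) * μ (ball x δ) := by ring

theorem DoublingUpTo.measure_ball_add_le_pow_mul (hμ : DoublingUpTo μ c R₀) {p x : X} {R δ : ℝ}
    (hδ : 0 < δ) (hx : x ∈ ball p R) {k : ℕ} (hk : 2 * R + δ ≤ 2 ^ k * δ)
    (hkR₀ : 2 ^ k * δ ≤ R₀) :
    μ (ball p (R + δ)) ≤ c ^ k * μ (ball x δ) := by
  have hsub : ball p (R + δ) ⊆ ball x (2 ^ k * δ) := by
    apply ball_subset_ball'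
    rw [mem_ball'] at hx
    linarith
  exact (measure_mono hsub).trans (hμ.measure_ball_two_pow_mul_le x hδ hkR₀)

end Doubling

theorem asymptotically_full_measure_iff_general
    (X : ℕ → Type) [∀ i, MetricSpace (X i)] [∀ i, MeasurableSpace (X i)]
    (μ : ∀ i, Measure (X i)) (p : ∀ i, X i)
    (hpos : ∀ i (x : X i) (r : ℝ), 0 < r →
      0 < μ i (ball x r) ∧ μ i (ball x r) < ⊤)
    (C : ℝ → ℝ≥0∞) (hC : ∀ R : ℝ, 0 < R → 1 ≤ C R ∧ C R ≠ ⊤)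
    (hdoub : ∀ R : ℝ, 0 < R → ∀ i (x : X i) (r : ℝ), 0 < r → r ≤ R →
      μ i (ball x (2 * r)) ≤ C R * μ i (ball x r))
    (U : ∀ i, Set (X i)) (hU : ∀ i, MeasurableSet (U i)) :
    (∀ R : ℝ, 0 < R →
        Tendsto (fun i => μ i (U i ∩ ball (p i) R) / μ i (ball (p i) R))
          atTop (𝓝 1)) ↔
      (∀ R δ : ℝ, 0 < δ → δ < R →
        ∃ ε : ℕ → ℝ, Tendsto ε atTop (𝓝 0) ∧
          ∀ i, ∀ x ∈ ball (p i) R,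
            (1 - ENNReal.ofReal (ε i)) * μ i (ball x δ) ≤
              μ i (U i ∩ ball x δ)) := by
  constructor
  · intro hfull R δ hδ hδR
    obtain ⟨k, hk⟩ := pow_unbounded_of_one_lt ((2 * R + δ) / δ) one_lt_two
    rw [div_lt_iff₀ hδ] at hk
    have hR₀ : 0 < 2 ^ k * δ := by positivity
    set K := C (2 ^ k * δ) ^ k
    have hK : K ≠ ∞ := pow_ne_top (hC _ hR₀).2
    set e : ℕ → ℝ≥0∞ := fun i =>
      K * (1 - μ i (U i ∩ ball (p i) (R + δ)) / μ i (ball (p i) (R + δ)))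
    have he : Tendsto e atTop (𝓝 0) :=
      ENNReal.tendsto_const_mul_one_sub (hfull (R + δ) (by linarith)) hK
    refine ⟨fun i => (e i).toReal, by
      simpa [Function.comp_def] using (tendsto_toReal zero_ne_top).comp he,
      fun i x hx => ?_⟩
    rw [ofReal_toReal (mul_ne_top hK (tsub_le_self.trans_lt one_lt_top).ne)]
    exact one_sub_mul_measure_le_measure_inter (hU i)
      (ball_subset_ball' (by rw [mem_ball] at hx; linarith))
      (hpos i (p i) (R + δ) (by linarith)).2.ne
      (DoublingUpTo.measure_ball_add_le_pow_mul (hdoub _ hR₀ i) hδ hx hk.le le_rfl)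
  · intro hunif R hR
    obtain ⟨ε, hε, hεU⟩ := hunif (R + 1) R hR (by linarith)
    have hlower : Tendsto (fun i => 1 - ENNReal.ofReal (ε i)) atTop (𝓝 1) := by
      simpa using ENNReal.Tendsto.sub tendsto_const_nhds (ENNReal.tendsto_ofReal hε)
        (.inl one_ne_top)
    refine tendsto_of_tendsto_of_tendsto_of_le_of_le hlower tendsto_const_nhds (fun i => ?_)
      (fun i => ENNReal.div_le_of_le_mul (by simpa using measure_mono Set.inter_subset_right))
    obtain ⟨hball0, hballfin⟩ := hpos i (p i) R hR
    rw [ENNReal.le_div_iff_mul_le (.inl hball0.ne') (.inl hballfin.ne)]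
    exact hεU i (p i) (mem_ball_self (by linarith))

/-- **Corollary (a-full-measure).**
For a sequence of pointed metric measure spaces with a uniform local doubling
condition, a sequence of Borel sets `Uᵢ ⊆ Xᵢ` has asymptotically full measure
around the base points iff it has asymptotically full measure uniformly at every
fixed small scale. -/
theorem asymptotically_full_measure_iff
    (X : ℕ → Type) [∀ i, MetricSpace (X i)] [∀ i, MeasurableSpace (X i)]
    [∀ i, BorelSpace (X i)] (μ : ∀ i, Measure (X i)) (p : ∀ i, X i)
    (hpos : ∀ i (x : X i) (r : ℝ), 0 < r →
      0 < μ i (ball x r) ∧ μ i (ball x r) < ⊤)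
    (C : ℝ → ℝ≥0∞) (hC : ∀ R : ℝ, 0 < R → 1 ≤ C R ∧ C R ≠ ⊤)
    (hdoub : ∀ R : ℝ, 0 < R → ∀ i (x : X i) (r : ℝ), 0 < r → r ≤ R →
      μ i (ball x (2 * r)) ≤ C R * μ i (ball x r))
    (U : ∀ i, Set (X i)) (hU : ∀ i, MeasurableSet (U i)) :
    (∀ R : ℝ, 0 < R →
        Tendsto (fun i => μ i (U i ∩ ball (p i) R) / μ i (ball (p i) R))
          atTop (𝓝 1)) ↔
      (∀ R δ : ℝ, 0 < δ → δ < R →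
        ∃ ε : ℕ → ℝ, Tendsto ε atTop (𝓝 0) ∧
          ∀ i, ∀ x ∈ ball (p i) R,
            (1 - ENNReal.ofReal (ε i)) * μ i (ball x δ) ≤
              μ i (U i ∩ ball x δ)) :=
  asymptotically_full_measure_iff_general X μ p hpos C hC hdoub U hU
end
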